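/- arXiv:1807.02293 — 7 statements merged into one kernel-verified Lean document; each statement's English description precedes it below -/
import Mathlib

section
/- Let 0 < m < ℓ ≤ d and let E ⊆ F ⊆ ℝ^d. If F is ℓ-regular and E is m-regular, then E is porous in F. -/
/-!
Suppose `E` fails to be `κ`-porous at `x ∈ E` and scale `r`, so every point of `F` near `x` lies
within `κr` of `E`. Take a maximal `2κr`-separated set `S` in `E` near `x`. The balls of radius
`κr` around `S` are disjoint, so the `m`-regularity of `E` gives `#S · (κr)^m ≲ r^m`; the balls of
radius `3κr` around `S` cover `F ∩ B(x, r/6)`, so the `ℓ`-regularity of `F` gives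
`r^ℓ ≲ #S · (κr)^ℓ`. Together, `1 ≲ κ^(ℓ - m)`, which fails for small `κ` since `m < ℓ`.
-/

open MeasureTheory Metric Set Filter Topology
open scoped ENNReal NNReal

section Regularity

variable {X : Type*} [PseudoMetricSpace X] [MeasurableSpace X]

def IsLowerAhlforsRegular (μ : Measure X) (s : Set X) (a ℓ : ℝ) : Prop :=
  ∀ x ∈ s, ∀ r : ℝ, 0 < r → r ≤ 1 → ENNReal.ofReal (a * r ^ ℓ) ≤ μ (ball x r ∩ s)

def IsUpperAhlforsRegular (μ : Measure X) (s : Set X) (b ℓ : ℝ) : Prop :=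
  ∀ x ∈ s, ∀ r : ℝ, 0 < r → r ≤ 1 → μ (ball x r ∩ s) ≤ ENNReal.ofReal (b * r ^ ℓ)

end Regularity

theorem ENNReal.ofReal_mul_ofReal_le (p q : ℝ) :
    ENNReal.ofReal p * ENNReal.ofReal q ≤ ENNReal.ofReal (p * q) := by
  rcases le_total 0 p with hp | hp
  · rw [ENNReal.ofReal_mul hp]
  · simp [ENNReal.ofReal_of_nonpos hp]

theorem mul_le_mul_of_le_nsmul_of_nsmul_le {a b c e : ℝ} {n : ℕ} (ha : 0 < a) (hc : 0 < c)
    (h₁ : ENNReal.ofReal a ≤ n • ENNReal.ofReal b) (h₂ : n • ENNReal.ofReal c ≤ ENNReal.ofReal e) :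
    a * c ≤ b * e := by
  refine (ENNReal.ofReal_le_ofReal_iff'.1 ?_).resolve_right (mul_pos ha hc).not_ge
  calc ENNReal.ofReal (a * c) = ENNReal.ofReal a * ENNReal.ofReal c := ENNReal.ofReal_mul ha.le
    _ ≤ n • ENNReal.ofReal b * ENNReal.ofReal c := by gcongr
    _ = ENNReal.ofReal b * (n • ENNReal.ofReal c) := by simp only [nsmul_eq_mul]; ring
    _ ≤ ENNReal.ofReal b * ENNReal.ofReal e := by gcongr
    _ ≤ ENNReal.ofReal (b * e) := ENNReal.ofReal_mul_ofReal_le _ _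

theorem eventually_mul_rpow_lt {C a p : ℝ} (ha : 0 < a) (hp : 0 < p) :
    ∀ᶠ κ in 𝓝 0, C * κ ^ p < a := by
  have hlim : Tendsto (fun κ : ℝ => C * κ ^ p) (𝓝 0) (𝓝 0) := by
    simpa [Real.zero_rpow hp.ne'] using
      ((Real.continuousAt_rpow_const 0 p (Or.inr hp.le)).tendsto).const_mul C
  exact hlim.eventually (gt_mem_nhds ha)

namespace Metric

theorem exists_finite_isSeparated_isCover {X : Type*} [PseudoEMetricSpace X] {A : Set X}
    {ε : ℝ≥0} (hε : ε ≠ 0) (hA : TotallyBounded A) :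
    ∃ S ⊆ A, S.Finite ∧ IsSeparated ε S ∧ IsCover ε A S := by
  obtain ⟨N, -, hNfin, hN⟩ :=
    exists_finite_isCover_of_totallyBounded (ε := ε / 2) (by simpa using hε) hA
  have hpack : packingNumber ε A ≠ ⊤ := by
    refine ne_top_of_le_ne_top hNfin.encard_lt_top.ne ?_
    calc packingNumber ε A = packingNumber (2 * (ε / 2)) A := by rw [mul_div_cancel₀ _ two_ne_zero]
      _ ≤ externalCoveringNumber (ε / 2) A := packingNumber_two_mul_le_externalCoveringNumber _ _
      _ ≤ N.encard := hN.externalCoveringNumber_le_encard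
  exact ⟨maximalSeparatedSet ε A, maximalSeparatedSet_subset,
    Set.encard_ne_top_iff.1 (encard_maximalSeparatedSet hpack ▸ hpack),
    isSeparated_maximalSeparatedSet, isCover_maximalSeparatedSet hpack⟩

variable {X : Type*} [PseudoMetricSpace X]

theorem IsSeparated.pairwiseDisjoint_ball {s : Set X} {δ : ℝ}
    (hs : IsSeparated (ENNReal.ofReal (2 * δ)) s) : s.PairwiseDisjoint (ball · δ) := by
  intro p hp q hq hpq
  have hpq : 2 * δ < dist p q := (ENNReal.ofReal_lt_ofReal_iff'.1 (edist_dist p q ▸ hs hp hq hpq)).1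
  exact ball_disjoint_ball (by linarith)

theorem IsSeparated.card_nsmul_le_measure [MeasurableSpace X] [OpensMeasurableSpace X]
    {μ : Measure X} {s : Finset X} {A B : Set X} {δ : ℝ} {c : ℝ≥0∞}
    (hs : IsSeparated (ENNReal.ofReal (2 * δ)) (s : Set X)) (hB : ∀ p ∈ s, ball p δ ⊆ B)
    (hc : ∀ p ∈ s, c ≤ μ (ball p δ ∩ A)) : s.card • c ≤ μ (B ∩ A) :=
  calc s.card • c ≤ ∑ p ∈ s, μ.restrict A (ball p δ) := Finset.card_nsmul_le_sum _ _ _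
        fun p hp => (hc p hp).trans_eq (Measure.restrict_apply measurableSet_ball).symm
    _ = μ.restrict A (⋃ p ∈ s, ball p δ) :=
        (measure_biUnion_finset hs.pairwiseDisjoint_ball fun _ _ => measurableSet_ball).symm
    _ = μ ((⋃ p ∈ s, ball p δ) ∩ A) :=
        Measure.restrict_apply (Finset.measurableSet_biUnion _ fun _ _ => measurableSet_ball)
    _ ≤ μ (B ∩ A) := measure_mono (inter_subset_inter_left _ (iUnion₂_subset hB))

theorem inter_subset_biUnion_ball_of_isCover {E F S : Set X} {x : X} {ρ δ : ℝ} {ε : ℝ≥0}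
    (hnear : ∀ y ∈ ball x ρ ∩ F, (ball y δ ∩ E).Nonempty)
    (hS : IsCover ε (E ∩ ball x (ρ + δ)) S) :
    ball x ρ ∩ F ⊆ ⋃ p ∈ S, ball p (δ + ε) ∩ F := by
  intro y hy
  obtain ⟨e, hey, he⟩ := hnear y hy
  have hyx : dist y x < ρ := hy.1
  have hex : e ∈ ball x (ρ + δ) := by
    rw [mem_ball] at hey ⊢
    linarith [dist_triangle e y x]
  obtain ⟨p, hp, hep⟩ : ∃ p ∈ S, e ∈ closedBall p ε := by
    simpa using hS.subset_iUnion_closedBall ⟨he, hex⟩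
  refine mem_biUnion hp ⟨?_, hy.2⟩
  rw [mem_ball] at hey ⊢
  rw [mem_closedBall] at hep
  linarith [dist_triangle y e p, dist_comm e y]

end Metric

theorem mul_rpow_le_of_forall_ball_inter_nonempty {X : Type*} [PseudoMetricSpace X] [ProperSpace X]
    [MeasurableSpace X] [OpensMeasurableSpace X] {μ ν : Measure X} {E F : Set X} {x : X}
    {m ℓ aE bE aF bF κ r : ℝ} (hEF : E ⊆ F) (hx : x ∈ E) (haF : 0 < aF) (haE : 0 < aE)
    (hκ : 0 < κ) (hκ6 : κ ≤ 1 / 6) (hr : 0 < r) (hr1 : r ≤ 1)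
    (hE : IsLowerAhlforsRegular μ E aE m) (hE' : IsUpperAhlforsRegular μ E bE m)
    (hF : IsLowerAhlforsRegular ν F aF ℓ) (hF' : IsUpperAhlforsRegular ν F bF ℓ)
    (hnear : ∀ y ∈ ball x (r / 6) ∩ F, (ball y (κ * r) ∩ E).Nonempty) :
    aF * (r / 6) ^ ℓ * (aE * (κ * r) ^ m) ≤ bF * (3 * (κ * r)) ^ ℓ * (bE * r ^ m) := by
  set δ := κ * r
  have hδ : 0 < δ := mul_pos hκ hr
  have hδr : δ ≤ r / 6 := by nlinarith
  have hA : TotallyBounded (E ∩ ball x (r / 6 + δ)) :=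
    (isBounded_ball.subset inter_subset_right).isCompact_closure.totallyBounded.subset
      subset_closure
  obtain ⟨S, hSA, hSfin, hSsep, hScov⟩ :=
    exists_finite_isSeparated_isCover (by simpa using hδ) hA (ε := (2 * δ).toNNReal)
  lift S to Finset X using hSfin
  have hSE : ∀ p ∈ S, p ∈ E := fun p hp => (hSA hp).1
  have hpack : S.card • ENNReal.ofReal (aE * δ ^ m) ≤ ENNReal.ofReal (bE * r ^ m) := by
    refine (hSsep.card_nsmul_le_measure (fun p hp => ball_subset_ball' ?_)
      fun p hp => hE p (hSE p hp) δ hδ (by linarith)).trans (hE' x hx r hr hr1)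
    linarith [mem_ball.1 (hSA hp).2]
  have hcover : ball x (r / 6) ∩ F ⊆ ⋃ p ∈ S, ball p (3 * δ) ∩ F := by
    have h3δ : δ + ((2 * δ).toNNReal : ℝ) = 3 * δ := by
      rw [Real.coe_toNNReal _ (by positivity)]; ring
    simpa only [h3δ, Finset.mem_coe] using inter_subset_biUnion_ball_of_isCover hnear hScov
  have hcount : ENNReal.ofReal (aF * (r / 6) ^ ℓ) ≤ S.card • ENNReal.ofReal (bF * (3 * δ) ^ ℓ) :=
    calc ENNReal.ofReal (aF * (r / 6) ^ ℓ) ≤ ν (ball x (r / 6) ∩ F) :=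
          hF x (hEF hx) _ (by positivity) (by linarith)
      _ ≤ ∑ p ∈ S, ν (ball p (3 * δ) ∩ F) :=
          (measure_mono hcover).trans (measure_biUnion_finset_le _ _)
      _ ≤ S.card • ENNReal.ofReal (bF * (3 * δ) ^ ℓ) := Finset.sum_le_card_nsmul _ _ _
          fun p hp => hF' p (hEF (hSE p hp)) _ (by positivity) (by linarith)
  exact mul_le_mul_of_le_nsmul_of_nsmul_le (by positivity) (by positivity) hcount hpack

theorem mul_le_mul_rpow_sub_of_mul_rpow_le {m ℓ aE bE aF bF κ r : ℝ} (hκ : 0 < κ) (hr : 0 < r)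
    (h : aF * (r / 6) ^ ℓ * (aE * (κ * r) ^ m) ≤ bF * (3 * (κ * r)) ^ ℓ * (bE * r ^ m)) :
    aF * aE ≤ bF * bE * 18 ^ ℓ * κ ^ (ℓ - m) := by
  have hP : 0 < κ ^ m * r ^ ℓ * r ^ m / 6 ^ ℓ := by positivity
  have hκℓ : κ ^ ℓ = κ ^ (ℓ - m) * κ ^ m := by rw [← Real.rpow_add hκ, sub_add_cancel]
  have h18 : (18 : ℝ) ^ ℓ = 3 ^ ℓ * 6 ^ ℓ := by
    rw [← Real.mul_rpow (by norm_num) (by norm_num)]; norm_num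
  rw [Real.div_rpow hr.le (by norm_num), Real.mul_rpow hκ.le hr.le,
    Real.mul_rpow (by norm_num) (by positivity), Real.mul_rpow hκ.le hr.le, hκℓ] at h
  refine le_of_mul_le_mul_right ?_ hP
  calc aF * aE * (κ ^ m * r ^ ℓ * r ^ m / 6 ^ ℓ)
      = aF * (r ^ ℓ / 6 ^ ℓ) * (aE * (κ ^ m * r ^ m)) := by ring
    _ ≤ _ := h
    _ = _ := by rw [h18]; field_simp

theorem lower_dimensional_implies_porous_general (d : ℕ) (m ℓ : ℝ)
    (hmℓ : m < ℓ)
    (E F : Set (EuclideanSpace ℝ (Fin d))) (hEF : E ⊆ F)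
    (aF bF : ℝ) (haF : 0 < aF)
    (hFreg : ∀ x ∈ F, ∀ r : ℝ, 0 < r → r ≤ 1 →
      ENNReal.ofReal (aF * r ^ ℓ) ≤ μH[ℓ] (ball x r ∩ F) ∧
      μH[ℓ] (ball x r ∩ F) ≤ ENNReal.ofReal (bF * r ^ ℓ))
    (aE bE : ℝ) (haE : 0 < aE)
    (hEreg : ∀ x ∈ E, ∀ r : ℝ, 0 < r → r ≤ 1 →
      ENNReal.ofReal (aE * r ^ m) ≤ μH[m] (ball x r ∩ E) ∧
      μH[m] (ball x r ∩ E) ≤ ENNReal.ofReal (bE * r ^ m)) :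
    ∃ κ : ℝ, 0 < κ ∧ κ ≤ 1 ∧ ∀ x ∈ E, ∀ r : ℝ, 0 < r → r ≤ 1 →
      ∃ y ∈ ball x r ∩ F, ball y (κ * r) ∩ E = ∅ := by
  obtain ⟨κ, hκ_small, hκ0, hκ6⟩ :
      ∃ κ, bF * bE * 18 ^ ℓ * κ ^ (ℓ - m) < aF * aE ∧ κ ∈ Ioc 0 (1 / 6) :=
    (((eventually_mul_rpow_lt (mul_pos haF haE) (sub_pos.2 hmℓ)).filter_mono
      nhdsWithin_le_nhds).and (Ioc_mem_nhdsGT (by norm_num))).exists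
  refine ⟨κ, hκ0, hκ6.trans (by norm_num), fun x hx r hr hr1 => ?_⟩
  by_contra! hnear
  refine hκ_small.not_ge (mul_le_mul_rpow_sub_of_mul_rpow_le hκ0 hr ?_)
  refine mul_rpow_le_of_forall_ball_inter_nonempty hEF hx haF haE hκ0 hκ6 hr hr1
    (fun x hx r h0 h1 => (hEreg x hx r h0 h1).1) (fun x hx r h0 h1 => (hEreg x hx r h0 h1).2)
    (fun x hx r h0 h1 => (hFreg x hx r h0 h1).1) (fun x hx r h0 h1 => (hFreg x hx r h0 h1).2)
    fun y hy => hnear y ⟨ball_subset_ball (by linarith) hy.1, hy.2⟩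

/-- If `F` is `ℓ`-regular and `E ⊆ F` is `m`-regular with `m < ℓ`, then `E` is
porous in `F`. -/
theorem lower_dimensional_implies_porous (d : ℕ) (m ℓ : ℝ)
    (hm0 : 0 < m) (hmℓ : m < ℓ) (hℓd : ℓ ≤ d)
    (E F : Set (EuclideanSpace ℝ (Fin d))) (hEF : E ⊆ F)
    (aF bF : ℝ) (haF : 0 < aF) (habF : aF ≤ bF)
    (hFreg : ∀ x ∈ F, ∀ r : ℝ, 0 < r → r ≤ 1 →
      ENNReal.ofReal (aF * r ^ ℓ) ≤ μH[ℓ] (ball x r ∩ F) ∧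
      μH[ℓ] (ball x r ∩ F) ≤ ENNReal.ofReal (bF * r ^ ℓ))
    (aE bE : ℝ) (haE : 0 < aE) (habE : aE ≤ bE)
    (hEreg : ∀ x ∈ E, ∀ r : ℝ, 0 < r → r ≤ 1 →
      ENNReal.ofReal (aE * r ^ m) ≤ μH[m] (ball x r ∩ E) ∧
      μH[m] (ball x r ∩ E) ≤ ENNReal.ofReal (bE * r ^ m)) :
    ∃ κ : ℝ, 0 < κ ∧ κ ≤ 1 ∧ ∀ x ∈ E, ∀ r : ℝ, 0 < r → r ≤ 1 →
      ∃ y ∈ ball x r ∩ F, ball y (κ * r) ∩ E = ∅ :=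
  lower_dimensional_implies_porous_general d m ℓ hmℓ E F hEF aF bF haF hFreg aE bE haE hEreg
end

section
/- Let E ⊆ F ⊆ ℝ^d be nonempty sets and let 0 < m < ℓ. Suppose there is a constant C > 0 such that for every x ∈ E and all 0 < r < R < 2·diam(E) the set E ∩ B(x,R) can be covered by at most C·(R/r)^m balls of radius r centered at points of E, and suppose there is a constant c > 0 such that for every x ∈ F and all 0 < r < R < 2·diam(F) every finite family of balls of radius r centered at points of F whose union contains F ∩ B(x,R) has at least c·(R/r)^ℓ members. Then E is uniformly porous in F. (The two hypotheses express that the upper Assouad dimension of E is at most m and the lower Assouad dimension of F is at least ℓ.) -/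
open MeasureTheory Metric

/-- If the upper Assouad dimension of `E` is at most `m` and the lower Assouad
dimension of `F ⊇ E` is at least `ℓ > m` (expressed via covering counts), then `E`
is uniformly porous in `F`. -/
theorem assouad_gap_implies_uniformly_porous (d : ℕ) (m ℓ : ℝ) (hm0 : 0 < m) (hmℓ : m < ℓ)
    (E F : Set (EuclideanSpace ℝ (Fin d))) (hEF : E ⊆ F)
    (hEne : E.Nonempty) (hFne : F.Nonempty)
    (C : ℝ) (hC : 0 < C)
    (hupper : ∀ x ∈ E, ∀ r R : ℝ, 0 < r → r < R →
      ENNReal.ofReal R < 2 * EMetric.diam E →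
      ∃ T : Finset (EuclideanSpace ℝ (Fin d)),
        (T : Set (EuclideanSpace ℝ (Fin d))) ⊆ E ∧
        E ∩ ball x R ⊆ ⋃ y ∈ T, ball y r ∧ (T.card : ℝ) ≤ C * (R / r) ^ m)
    (c : ℝ) (hc : 0 < c)
    (hlower : ∀ x ∈ F, ∀ r R : ℝ, 0 < r → r < R →
      ENNReal.ofReal R < 2 * EMetric.diam F →
      ∀ T : Finset (EuclideanSpace ℝ (Fin d)),
        (T : Set (EuclideanSpace ℝ (Fin d))) ⊆ F →
        F ∩ ball x R ⊆ ⋃ y ∈ T, ball y r → c * (R / r) ^ ℓ ≤ T.card) :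
    ∃ κ : ℝ, 0 < κ ∧ κ ≤ 1 ∧ ∀ x ∈ E, ∀ r : ℝ, 0 < r → ENNReal.ofReal r ≤ EMetric.diam E →
      ∃ y ∈ ball x r ∩ F, ball y (κ * r) ∩ E = ∅ := by
  have hδ0 : 0 < ℓ - m := by linarith
  have h2p : (0:ℝ) < (2:ℝ) ^ (ℓ + m) := Real.rpow_pos_of_pos (by norm_num) _
  set b : ℝ := c / (2 * C * (2:ℝ) ^ (ℓ + m)) with hb
  have hb0 : 0 < b := by positivity
  set κ : ℝ := min (1/4) (b ^ (ℓ - m)⁻¹) with hκdef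
  have hκ0 : 0 < κ := lt_min (by norm_num) (Real.rpow_pos_of_pos hb0 _)
  have hκ14 : κ ≤ 1/4 := min_le_left _ _
  refine ⟨κ, hκ0, by linarith, ?_⟩
  intro x hx r hr hrdiam
  by_contra hcon
  push_neg at hcon
  -- diam bounds
  have hE2 : ENNReal.ofReal ((1+κ)*r) < 2 * EMetric.diam E := by
    have h1 : ENNReal.ofReal ((1+κ)*r) < ENNReal.ofReal (2*r) := by
      apply ENNReal.ofReal_lt_ofReal_iff (by positivity) |>.2
      nlinarith
    calc ENNReal.ofReal ((1+κ)*r) < ENNReal.ofReal (2*r) := h1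
      _ = 2 * ENNReal.ofReal r := by
          rw [ENNReal.ofReal_mul (by norm_num)]; norm_num
      _ ≤ 2 * EMetric.diam E := by
          exact mul_le_mul_right hrdiam 2
  have hrF : ENNReal.ofReal r ≤ EMetric.diam F :=
    hrdiam.trans (EMetric.diam_mono hEF)
  have hF2 : ENNReal.ofReal r < 2 * EMetric.diam F := by
    have h0 : ENNReal.ofReal r < 2 * ENNReal.ofReal r := by
      rw [two_mul]
      exact ENNReal.lt_add_right ENNReal.ofReal_ne_top
        (by simpa using hr)
    exact h0.trans_le (mul_le_mul_right hrF 2)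
  obtain ⟨T, hTE, hTcov, hTcard⟩ :=
    hupper x hx (κ*r) ((1+κ)*r) (by positivity) (by nlinarith) hE2
  have hcov2 : F ∩ ball x r ⊆ ⋃ y ∈ T, ball y (2*κ*r) := by
    rintro z ⟨hzF, hzx⟩
    obtain ⟨e, hez, heE⟩ := hcon z ⟨hzx, hzF⟩
    have hezd : dist e z < κ * r := mem_ball.1 hez
    have hex : e ∈ E ∩ ball x ((1+κ)*r) := by
      refine ⟨heE, mem_ball.2 ?_⟩
      calc dist e x ≤ dist e z + dist z x := dist_triangle _ _ _
        _ < κ * r + r := by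
            have := mem_ball.1 hzx; linarith
        _ = (1+κ)*r := by ring
    obtain ⟨t, ht⟩ := Set.mem_iUnion.1 (hTcov hex)
    obtain ⟨htT, hte⟩ := Set.mem_iUnion.1 ht
    refine Set.mem_iUnion.2 ⟨t, Set.mem_iUnion.2 ⟨htT, mem_ball.2 ?_⟩⟩
    have : dist e t < κ * r := mem_ball.1 hte
    calc dist z t ≤ dist z e + dist e t := dist_triangle _ _ _
      _ < κ * r + κ * r := by rw [dist_comm z e]; linarith
      _ = 2*κ*r := by ring
  have hlow := hlower x (hEF hx) (2*κ*r) r (by positivity)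
    (by nlinarith) hF2 T (hTE.trans hEF) hcov2
  -- combine
  have hkey : c * (r/(2*κ*r)) ^ ℓ ≤ C * (((1+κ)*r)/(κ*r)) ^ m := hlow.trans hTcard
  have e1 : r/(2*κ*r) = (2*κ)⁻¹ := by
    rw [eq_div_iff (by positivity)] at *
    field_simp
  have e2 : ((1+κ)*r)/(κ*r) = (1+κ)/κ := by
    rw [div_eq_div_iff (by positivity) (by positivity)]
    ring
  rw [e1, e2] at hkey
  have h2' : ((1+κ)/κ : ℝ) ^ m ≤ (2/κ) ^ m := by
    apply Real.rpow_le_rpow (by positivity) _ hm0.le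
    gcongr
    linarith
  have hkey2 : c * ((2*κ)⁻¹) ^ ℓ ≤ C * (2/κ) ^ m := by
    calc c * ((2*κ)⁻¹) ^ ℓ ≤ C * ((1+κ)/κ) ^ m := hkey
      _ ≤ C * (2/κ) ^ m := by nlinarith [Real.rpow_nonneg (by positivity : (0:ℝ) ≤ (1+κ)/κ) m]
  -- rewrite powers
  have hκℓ : (0:ℝ) < κ ^ ℓ := Real.rpow_pos_of_pos hκ0 _
  have hκm : (0:ℝ) < κ ^ m := Real.rpow_pos_of_pos hκ0 _
  have h2ℓ : (0:ℝ) < (2:ℝ) ^ ℓ := Real.rpow_pos_of_pos (by norm_num) _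
  have h2m : (0:ℝ) < (2:ℝ) ^ m := Real.rpow_pos_of_pos (by norm_num) _
  have eA : ((2*κ)⁻¹ : ℝ) ^ ℓ = ((2:ℝ)^ℓ * κ^ℓ)⁻¹ := by
    rw [Real.inv_rpow (by positivity), Real.mul_rpow (by norm_num) hκ0.le]
  have eB : ((2/κ : ℝ)) ^ m = (2:ℝ)^m / κ^m := by
    rw [Real.div_rpow (by norm_num) hκ0.le]
  rw [eA, eB] at hkey2
  have hmain : c ≤ C * (2:ℝ)^(ℓ+m) * κ ^ (ℓ - m) := by
    have h3 : c ≤ C * (2:ℝ)^m / κ^m * ((2:ℝ)^ℓ * κ^ℓ) := by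
      rw [mul_inv] at hkey2
      have := mul_le_mul_of_nonneg_right hkey2 (by positivity : (0:ℝ) ≤ (2:ℝ)^ℓ * κ^ℓ)
      calc c = c * (((2:ℝ)^ℓ)⁻¹ * (κ^ℓ)⁻¹) * ((2:ℝ)^ℓ * κ^ℓ) := by
              field_simp
        _ ≤ C * ((2:ℝ)^m / κ^m) * ((2:ℝ)^ℓ * κ^ℓ) := this
        _ = C * (2:ℝ)^m / κ^m * ((2:ℝ)^ℓ * κ^ℓ) := by ring
    have e3 : C * (2:ℝ)^m / κ^m * ((2:ℝ)^ℓ * κ^ℓ) = C * (2:ℝ)^(ℓ+m) * κ ^ (ℓ - m) := by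
      rw [Real.rpow_add (by norm_num : (0:ℝ) < 2), Real.rpow_sub hκ0]
      field_simp
    linarith [e3 ▸ h3]
  have hκb : κ ^ (ℓ - m) ≤ b := by
    calc κ ^ (ℓ - m) ≤ (b ^ (ℓ-m)⁻¹) ^ (ℓ - m) :=
          Real.rpow_le_rpow hκ0.le (min_le_right _ _) hδ0.le
      _ = b := by
          rw [← Real.rpow_mul hb0.le, inv_mul_cancel₀ hδ0.ne', Real.rpow_one]
  have : c ≤ c / 2 := by
    calc c ≤ C * (2:ℝ)^(ℓ+m) * κ ^ (ℓ - m) := hmain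
      _ ≤ C * (2:ℝ)^(ℓ+m) * b := by
          apply mul_le_mul_of_nonneg_left hκb (by positivity)
      _ = c / 2 := by rw [hb]; field_simp
  linarith
end

section
/- Let E ⊆ ℝ^d be a nonempty porous set. Then there exist a constant C ≥ 1 and an exponent s ∈ (0,d) such that for every x ∈ E and all radii 0 < r < R ≤ 1 the set E ∩ B(x,R) can be covered by at most C·(R/r)^s balls of radius r centered at points of E. -/
/-!
Porosity creates, next to every point of a maximal `2ρ`-separated net of `A ⊆ E`, a hole: a
ball of radius `κρ/4` inside the `ρ`-neighbourhood of `A` but outside its `κρ/4`-neighbourhood.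
The holes are disjoint and the `3ρ`-balls around the net cover the `ρ`-neighbourhood, so going
from scale `ρ` to scale `κρ/4` removes the fixed proportion `θ = (κ/12)^d` of its volume. After
`k` steps the neighbourhood of `E ∩ B(x,R)` at scale `(κ/4)^k R` has volume at most
`(1-θ)^k (2R)^d` times that of the unit ball; packing the disjoint `r/4`-balls around an
`r/2`-separated net of `E ∩ B(x,R)` into it gives the bound with `s = d - α`, where
`(κ/4)^α = 1 - θ`; `α < d` because `(κ/4)^d < 1 - θ`.
-/

open MeasureTheory Metric

open scoped ENNReal

def IsPorous {X : Type*} [PseudoMetricSpace X] (κ : ℝ) (S : Set X) : Prop :=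
  ∀ x ∈ S, ∀ r : ℝ, 0 < r → r ≤ 1 → ∃ y ∈ ball x r, ball y (κ * r) ∩ S = ∅

theorem IsPorous.nontrivial {X : Type*} [PseudoMetricSpace X] {κ : ℝ} {S : Set X}
    (hS : IsPorous κ S) (hne : S.Nonempty) (hκ : 0 < κ) : Nontrivial X := by
  obtain ⟨x, hx⟩ := hne
  obtain ⟨y, -, hy⟩ := hS x hx 1 one_pos le_rfl
  refine ⟨⟨x, y, fun hxy ↦ ?_⟩⟩
  have hx' : x ∈ ball y (κ * 1) := by simpa [hxy] using hκ
  exact (Set.eq_empty_iff_forall_notMem.mp hy) x ⟨hx', hx⟩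

theorem TotallyBounded.exists_separated_finset_cover {X : Type*} [PseudoMetricSpace X]
    {A : Set X} (hA : TotallyBounded A) {δ : ℝ} (hδ : 0 < δ) :
    ∃ T : Finset X, ↑T ⊆ A ∧ (T : Set X).Pairwise (fun p q ↦ δ < dist p q) ∧
      A ⊆ ⋃ p ∈ T, closedBall p δ := by
  lift δ to NNReal using hδ.le
  have hpack : packingNumber δ A ≠ ⊤ := by
    obtain ⟨N, -, hNfin, hN⟩ := exists_finite_isCover_of_totallyBounded (ε := δ / 2)
      (div_pos (NNReal.coe_pos.mp hδ) two_pos).ne' hA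
    refine ne_top_of_le_ne_top hNfin.encard_lt_top.ne ?_
    calc packingNumber δ A = packingNumber (2 * (δ / 2)) A := by rw [mul_div_cancel₀ _ two_ne_zero]
      _ ≤ externalCoveringNumber (δ / 2) A := packingNumber_two_mul_le_externalCoveringNumber _ _
      _ ≤ N.encard := hN.externalCoveringNumber_le_encard
  have hfin : (maximalSeparatedSet δ A).Finite := by
    rw [← Set.encard_ne_top_iff, encard_maximalSeparatedSet hpack]
    exact hpack
  refine ⟨hfin.toFinset, by simpa using maximalSeparatedSet_subset, ?_, ?_⟩
  · intro p hp q hq hpq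
    have hsep : (δ : ℝ≥0∞) < edist p q :=
      isSeparated_maximalSeparatedSet (by simpa using hp) (by simpa using hq) hpq
    rw [edist_dist, ← ENNReal.ofReal_coe_nnreal] at hsep
    exact (ENNReal.ofReal_lt_ofReal_iff_of_nonneg δ.2).mp hsep
  · simpa using isCover_iff_subset_iUnion_closedBall.mp (isCover_maximalSeparatedSet hpack)

theorem IsPorous.exists_cover_and_holes {X : Type*} [PseudoMetricSpace X] {κ : ℝ} {S A : Set X}
    (hS : IsPorous κ S) (hκ : κ ≤ 2) (hAS : A ⊆ S) (hA : TotallyBounded A) {ρ : ℝ} (hρ0 : 0 < ρ)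
    (hρ1 : ρ ≤ 1) :
    ∃ (F : Finset X) (y : X → X), thickening ρ A ⊆ ⋃ p ∈ F, ball p (3 * ρ) ∧
      (F : Set X).PairwiseDisjoint (fun p ↦ ball (y p) (κ / 4 * ρ)) ∧
      ∀ p ∈ F, ball (y p) (κ / 4 * ρ) ⊆ thickening ρ A \ thickening (κ / 4 * ρ) A := by
  obtain ⟨F, hFA, hFsep, hAF⟩ := hA.exists_separated_finset_cover (by positivity : 0 < 2 * ρ)
  choose! y hyp hyS using fun p (hp : p ∈ A) ↦ hS p (hAS hp) (ρ / 2) (by positivity) (by linarith)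
  refine ⟨F, y, ?_, ?_, fun p hp ↦ ?_⟩
  · intro z hz
    obtain ⟨a, ha, hza⟩ := mem_thickening_iff.mp hz
    obtain ⟨p, hp, hap⟩ := Set.mem_iUnion₂.mp (hAF ha)
    refine Set.mem_iUnion₂.mpr ⟨p, hp, ?_⟩
    have := dist_triangle z a p
    have := mem_closedBall.mp hap
    rw [mem_ball]
    linarith
  · intro p hp q hq hpq
    refine ball_disjoint_ball ?_
    have hp' := mem_ball.mp (hyp p (hFA hp))
    have hq' := mem_ball.mp (hyp q (hFA hq))
    have hpq' : 2 * ρ < dist p q := hFsep hp hq hpq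
    have := dist_triangle4 p (y p) (y q) q
    rw [dist_comm p (y p)] at this
    nlinarith
  · have hp' := mem_ball.mp (hyp p (hFA hp))
    intro z hz
    refine ⟨mem_thickening_iff.mpr ⟨p, hFA hp, ?_⟩, fun hz' ↦ ?_⟩
    · have := dist_triangle z (y p) p
      have := mem_ball.mp hz
      nlinarith
    · obtain ⟨a, ha, hza⟩ := mem_thickening_iff.mp hz'
      have hay : a ∈ ball (y p) (κ * (ρ / 2)) := by
        have htri := dist_triangle a z (y p)
        rw [dist_comm a z] at htri
        exact mem_ball.mpr (by linarith [mem_ball.mp hz])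
      exact (Set.eq_empty_iff_forall_notMem.mp (hyS p (hFA hp))) a ⟨hay, hAS ha⟩

theorem le_pow_mul_of_forall_le_mul {f : ℝ → ℝ} {c β : ℝ} (hc0 : 0 < c) (hc1 : c ≤ 1)
    (hβ : 0 ≤ β) (hf : ∀ ρ, 0 < ρ → ρ ≤ 1 → f (c * ρ) ≤ β * f ρ) {R : ℝ} (hR0 : 0 < R)
    (hR1 : R ≤ 1) (k : ℕ) : f (c ^ k * R) ≤ β ^ k * f R := by
  induction k with
  | zero => simp
  | succ k ih =>
    calc f (c ^ (k + 1) * R) = f (c * (c ^ k * R)) := by ring_nf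
      _ ≤ β * f (c ^ k * R) :=
        hf _ (by positivity) (mul_le_one₀ (pow_le_one₀ hc0.le hc1) hR0.le hR1)
      _ ≤ β * (β ^ k * f R) := mul_le_mul_of_nonneg_left ih hβ
      _ = β ^ (k + 1) * f R := by ring

theorem exists_rpow_eq_of_pow_lt {c β : ℝ} {d : ℕ} (hc0 : 0 < c) (hc1 : c < 1) (hβ1 : β < 1)
    (h : c ^ d < β) : ∃ α : ℝ, 0 < α ∧ α < d ∧ c ^ α = β := by
  have hβ0 : 0 < β := (pow_pos hc0 d).trans h
  have hlogc : Real.log c < 0 := Real.log_neg hc0 hc1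
  refine ⟨Real.log β / Real.log c, div_pos_of_neg_of_neg (Real.log_neg hβ0 hβ1) hlogc, ?_, ?_⟩
  · rw [div_lt_iff_of_neg hlogc, ← Real.log_pow]
    exact Real.log_lt_log (by positivity) h
  · rw [Real.rpow_def_of_pos hc0, mul_div_cancel₀ _ hlogc.ne, Real.exp_log hβ0]

theorem rpow_pow_le_rpow_div_of_pow_succ_le {c α t : ℝ} (hc0 : 0 < c) (hα : 0 ≤ α) {k : ℕ}
    (hk : c ^ (k + 1) ≤ t) : (c ^ α) ^ k ≤ t ^ α / c ^ α := by
  rw [le_div_iff₀ (Real.rpow_pos_of_pos hc0 α), ← pow_succ, ← Real.rpow_mul_natCast hc0.le,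
    mul_comm, Real.rpow_natCast_mul hc0.le]
  exact Real.rpow_le_rpow (by positivity) hk hα

theorem le_mul_rpow_of_mul_pow_le {N c α r R : ℝ} {d k : ℕ} (hc0 : 0 < c) (hα : 0 ≤ α)
    (hr : 0 < r) (hR : 0 < R) (hk : c ^ (k + 1) ≤ r / (4 * R))
    (hN : N * (r / 4) ^ d ≤ (c ^ α) ^ k * (2 * R) ^ d) :
    N ≤ 8 ^ d / c ^ α * (R / r) ^ ((d : ℝ) - α) := by
  have hdecay : (c ^ α) ^ k ≤ (r / R) ^ α / c ^ α := by
    calc (c ^ α) ^ k ≤ (r / (4 * R)) ^ α / c ^ α := rpow_pow_le_rpow_div_of_pow_succ_le hc0 hα hk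
      _ ≤ (r / R) ^ α / c ^ α := by gcongr; linarith
  have hN' : N ≤ (c ^ α) ^ k * (8 * (R / r)) ^ d := by
    rw [show 8 * (R / r) = 2 * R / (r / 4) by field_simp; ring, div_pow, ← mul_div_assoc,
      le_div_iff₀ (by positivity)]
    exact hN
  have hRr : 0 < R / r := by positivity
  calc N ≤ (c ^ α) ^ k * (8 * (R / r)) ^ d := hN'
    _ ≤ (r / R) ^ α / c ^ α * (8 * (R / r)) ^ d := by gcongr
    _ = 8 ^ d / c ^ α * (R / r) ^ ((d : ℝ) - α) := by
      rw [Real.rpow_sub hRr, Real.rpow_natCast, ← inv_div R r, Real.inv_rpow hRr.le, mul_pow]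
      field_simp

theorem card_mul_addHaar_real_ball_le {X : Type*} [NormedAddCommGroup X] [MeasurableSpace X]
    [BorelSpace X] (μ : Measure X) [μ.IsAddHaarMeasure] {ι : Type*} {F : Finset ι} {c : ι → X}
    {a : ℝ} {S : Set X}
    (hS : μ S ≠ ∞) (hdisj : (F : Set ι).PairwiseDisjoint (fun i ↦ ball (c i) a))
    (hsub : ∀ i ∈ F, ball (c i) a ⊆ S) :
    F.card * μ.real (ball (0 : X) a) ≤ μ.real S := by
  calc F.card * μ.real (ball (0 : X) a) = ∑ i ∈ F, μ.real (ball (c i) a) := by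
        simp [Measure.addHaar_real_ball_center]
    _ = μ.real (⋃ i ∈ F, ball (c i) a) :=
        (measureReal_biUnion_finset hdisj (fun _ _ ↦ measurableSet_ball)
          (fun i hi ↦ measure_ne_top_of_subset (hsub i hi) hS)).symm
    _ ≤ μ.real S := measureReal_mono (Set.iUnion₂_subset hsub) hS

section AddHaar

variable {X : Type*} [NormedAddCommGroup X] [NormedSpace ℝ X] [FiniteDimensional ℝ X]
  [MeasurableSpace X] [BorelSpace X] (μ : Measure X) [μ.IsAddHaarMeasure]

theorem MeasureTheory.Measure.addHaar_real_ball_of_pos (x : X) {r : ℝ} (hr : 0 < r) :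
    μ.real (ball x r) = r ^ Module.finrank ℝ X * μ.real (ball 0 1) := by
  rw [measureReal_def, addHaar_ball_of_pos μ x hr, ENNReal.toReal_mul,
    ENNReal.toReal_ofReal (by positivity), measureReal_def]

theorem addHaar_real_le_card_mul_of_subset_biUnion_ball {ι : Type*} {F : Finset ι} {c : ι → X}
    {a : ℝ} {S : Set X}
    (hS : S ⊆ ⋃ i ∈ F, ball (c i) a) :
    μ.real S ≤ F.card * μ.real (ball (0 : X) a) := by
  calc μ.real S ≤ μ.real (⋃ i ∈ F, ball (c i) a) := measureReal_mono hS
        (measure_biUnion_lt_top F.finite_toSet fun _ _ ↦ measure_ball_lt_top).ne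
    _ ≤ ∑ i ∈ F, μ.real (ball (c i) a) := measureReal_biUnion_finset_le _ _
    _ = F.card * μ.real (ball (0 : X) a) := by simp [Measure.addHaar_real_ball_center]

theorem IsPorous.addHaar_real_thickening_le {κ : ℝ} {S A : Set X} (hS : IsPorous κ S)
    (hκ0 : 0 < κ) (hκ2 : κ ≤ 2) (hAS : A ⊆ S) (hA : Bornology.IsBounded A) {ρ : ℝ}
    (hρ0 : 0 < ρ) (hρ1 : ρ ≤ 1) :
    μ.real (thickening (κ / 4 * ρ) A) ≤
      (1 - (κ / 12) ^ Module.finrank ℝ X) * μ.real (thickening ρ A) := by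
  obtain ⟨F, y, hcover, hdisj, hholes⟩ := hS.exists_cover_and_holes hκ2 hAS
    (hA.isCompact_closure.totallyBounded.subset subset_closure) hρ0 hρ1
  have hfin : μ (thickening ρ A) ≠ ∞ := hA.thickening.measure_lt_top.ne
  have hhole_vol : F.card * μ.real (ball (0 : X) (κ / 4 * ρ)) ≤
      μ.real (thickening ρ A) - μ.real (thickening (κ / 4 * ρ) A) := by
    rw [← measureReal_sdiff (thickening_mono (by nlinarith) A) isOpen_thickening.measurableSet]
    exact card_mul_addHaar_real_ball_le μ (measure_ne_top_of_subset Set.sdiff_subset hfin) hdisj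
      hholes
  have hcover_vol : μ.real (thickening ρ A) ≤ F.card * μ.real (ball (0 : X) (3 * ρ)) :=
    addHaar_real_le_card_mul_of_subset_biUnion_ball μ hcover
  have hscale : μ.real (ball (0 : X) (κ / 4 * ρ)) =
      (κ / 12) ^ Module.finrank ℝ X * μ.real (ball (0 : X) (3 * ρ)) := by
    rw [μ.addHaar_real_ball_of_pos 0 (r := κ / 4 * ρ) (by positivity),
      μ.addHaar_real_ball_of_pos 0 (r := 3 * ρ) (by positivity), ← mul_assoc, ← mul_pow]
    ring_nf
  have hθ : 0 ≤ (κ / 12) ^ Module.finrank ℝ X := by positivity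
  rw [hscale] at hhole_vol
  nlinarith [mul_le_mul_of_nonneg_left hcover_vol hθ]

end AddHaar

theorem IsPorous.card_mul_pow_le {X : Type*} [NormedAddCommGroup X] [NormedSpace ℝ X]
    [FiniteDimensional ℝ X] {κ : ℝ} {S : Set X} (hS : IsPorous κ S) (hκ0 : 0 < κ)
    (hκ2 : κ ≤ 2) {x : X} {r R : ℝ} {k : ℕ} (hr : 0 < r) (hR1 : R ≤ 1)
    (hk : r / 4 ≤ (κ / 4) ^ k * R) {T : Finset X} (hTS : ↑T ⊆ S ∩ ball x R)
    (hT : (T : Set X).Pairwise (fun p q ↦ r / 2 < dist p q)) :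
    T.card * (r / 4) ^ Module.finrank ℝ X ≤
      (1 - (κ / 12) ^ Module.finrank ℝ X) ^ k * (2 * R) ^ Module.finrank ℝ X := by
  borelize X
  set μ : Measure X := Measure.addHaar
  set d := Module.finrank ℝ X
  set A := S ∩ ball x R
  have hA : Bornology.IsBounded A := isBounded_ball.subset Set.inter_subset_right
  have hR0 : 0 < R := pos_of_mul_pos_right (by linarith) (by positivity)
  have hβ : 0 ≤ 1 - (κ / 12) ^ d := by
    linarith [pow_le_one₀ (n := d) (by positivity : 0 ≤ κ / 12) (by linarith)]
  have hpack : T.card * μ.real (ball (0 : X) (r / 4)) ≤ μ.real (thickening (r / 4) A) := by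
    refine card_mul_addHaar_real_ball_le μ hA.thickening.measure_lt_top.ne
      (fun p hp q hq hpq ↦ ball_disjoint_ball ?_) (fun p hp ↦ ball_subset_thickening (hTS hp) _)
    linarith [hT hp hq hpq]
  have hdecay : μ.real (thickening ((κ / 4) ^ k * R) A) ≤
      (1 - (κ / 12) ^ d) ^ k * μ.real (thickening R A) :=
    le_pow_mul_of_forall_le_mul (f := fun ρ ↦ μ.real (thickening ρ A)) (by positivity)
      (by linarith) hβ (fun ρ hρ0 hρ1 ↦ hS.addHaar_real_thickening_le μ hκ0 hκ2
        Set.inter_subset_left hA hρ0 hρ1) hR0 hR1 k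
  have hball : thickening R A ⊆ ball x (2 * R) := by
    intro z hz
    obtain ⟨a, ha, hza⟩ := mem_thickening_iff.mp hz
    have := dist_triangle z a x
    have := mem_ball.mp ha.2
    rw [mem_ball]
    linarith
  have hvol : T.card * μ.real (ball (0 : X) (r / 4)) ≤
      (1 - (κ / 12) ^ d) ^ k * μ.real (ball x (2 * R)) := by
    calc T.card * μ.real (ball (0 : X) (r / 4)) ≤ μ.real (thickening (r / 4) A) := hpack
      _ ≤ μ.real (thickening ((κ / 4) ^ k * R) A) :=
        measureReal_mono (thickening_mono hk A) hA.thickening.measure_lt_top.ne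
      _ ≤ (1 - (κ / 12) ^ d) ^ k * μ.real (thickening R A) := hdecay
      _ ≤ (1 - (κ / 12) ^ d) ^ k * μ.real (ball x (2 * R)) :=
        mul_le_mul_of_nonneg_left (measureReal_mono hball measure_ball_lt_top.ne) (pow_nonneg hβ k)
  rw [μ.addHaar_real_ball_of_pos 0 (by positivity), μ.addHaar_real_ball_of_pos x (by positivity),
    ← mul_assoc, ← mul_assoc] at hvol
  exact le_of_mul_le_mul_right hvol (ENNReal.toReal_pos (measure_ball_pos μ 0 one_pos).ne'
    measure_ball_lt_top.ne)

theorem IsPorous.exists_card_le_mul_rpow {X : Type*} [NormedAddCommGroup X] [NormedSpace ℝ X]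
    [FiniteDimensional ℝ X] {κ : ℝ} {S : Set X} (hS : IsPorous κ S) (hne : S.Nonempty)
    (hκ0 : 0 < κ) (hκ1 : κ ≤ 1) :
    ∃ C s : ℝ, 1 ≤ C ∧ 0 < s ∧ s < Module.finrank ℝ X ∧
      ∀ x ∈ S, ∀ r R : ℝ, 0 < r → r < R → R ≤ 1 →
        ∃ T : Finset X, ↑T ⊆ S ∧ S ∩ ball x R ⊆ ⋃ y ∈ T, ball y r ∧
          (T.card : ℝ) ≤ C * (R / r) ^ s := by
  have := hS.nontrivial hne hκ0
  set d := Module.finrank ℝ X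
  have hd : d ≠ 0 := Module.finrank_pos.ne'
  have hcd : (κ / 4) ^ d < 1 - (κ / 12) ^ d := by
    linarith [pow_le_of_le_one (by positivity : 0 ≤ κ / 4) (by linarith) hd,
      pow_le_of_le_one (by positivity : 0 ≤ κ / 12) (by linarith) hd]
  obtain ⟨α, hα0, hαd, hcα⟩ := exists_rpow_eq_of_pow_lt (by positivity) (by linarith)
    (by linarith [pow_pos (by positivity : 0 < κ / 12) d]) hcd
  refine ⟨8 ^ d / (κ / 4) ^ α, d - α, ?_, by linarith, by linarith,
    fun x hx r R hr hrR hR1 ↦ ?_⟩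
  · rw [hcα, one_le_div (by linarith [pow_pos (by positivity : 0 < κ / 4) d])]
    linarith [one_le_pow₀ (n := d) (by norm_num : (1 : ℝ) ≤ 8),
      pow_pos (by positivity : 0 < κ / 12) d]
  have hR0 : 0 < R := hr.trans hrR
  have hA : TotallyBounded (S ∩ ball x R) :=
    ((isBounded_ball.subset Set.inter_subset_right).isCompact_closure).totallyBounded.subset
      subset_closure
  obtain ⟨T, hTS, hTsep, hcover⟩ := hA.exists_separated_finset_cover (half_pos hr)
  obtain ⟨k, hk1, hk2⟩ := exists_nat_pow_near_of_lt_one (by positivity : 0 < r / (4 * R))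
    (by rw [div_le_one (by positivity)]; linarith) (by positivity : 0 < κ / 4) (by linarith)
  refine ⟨T, hTS.trans Set.inter_subset_left,
    hcover.trans (Set.iUnion₂_mono fun y _ ↦ closedBall_subset_ball (half_lt_self hr)), ?_⟩
  have hk : r / 4 ≤ (κ / 4) ^ k * R :=
    calc r / 4 = r / (4 * R) * R := by field_simp
      _ ≤ (κ / 4) ^ k * R := by gcongr
  have hcard := hS.card_mul_pow_le hκ0 (by linarith) hr hR1 hk hTS hTsep
  rw [← hcα] at hcard
  exact le_mul_rpow_of_mul_pow_le (by positivity) hα0.le hr hR0 hk1.le hcard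

/-- A porous subset of `ℝ^d` has a covering property with an exponent `s < d`:
for `0 < r < R ≤ 1`, the set `E ∩ B(x,R)` can be covered by at most `C (R/r)^s`
balls of radius `r` centered at points of `E`. -/
theorem porous_implies_covering_property (d : ℕ) (E : Set (EuclideanSpace ℝ (Fin d)))
    (hEne : E.Nonempty) (κ : ℝ) (hκ0 : 0 < κ) (hκ1 : κ ≤ 1)
    (hpor : ∀ x ∈ E, ∀ r : ℝ, 0 < r → r ≤ 1 →
      ∃ y ∈ ball x r, ball y (κ * r) ∩ E = ∅) :
    ∃ C s : ℝ, 1 ≤ C ∧ 0 < s ∧ s < d ∧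
      ∀ x ∈ E, ∀ r R : ℝ, 0 < r → r < R → R ≤ 1 →
        ∃ T : Finset (EuclideanSpace ℝ (Fin d)),
          (T : Set (EuclideanSpace ℝ (Fin d))) ⊆ E ∧
          E ∩ ball x R ⊆ ⋃ y ∈ T, ball y r ∧ (T.card : ℝ) ≤ C * (R / r) ^ s := by
  simpa [finrank_euclideanSpace_fin] using
    IsPorous.exists_card_le_mul_rpow hpor hEne hκ0 hκ1
end

section
/- A set E ⊆ ℝ^d is uniformly porous if and only if there exist a constant C ≥ 1 and an exponent s ∈ (0,d) such that for every x ∈ E and all radii 0 < r < R < 2·diam(E) the set E ∩ B(x,R) can be covered by at most C·(R/r)^s balls of radius r centered at points of E (the latter condition says that the upper Assouad dimension of E is strictly less than d). -/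
/-!
Porous ⟹ small dimension. Cover `A = E ∩ B(x,R)` by the grid cubes of side `t = R / n ^ k`
meeting `A`, together with their neighbours. Refining by a factor `n`, each such cube has `n ^ d`
children; porosity at a point of `A` in the cube gives a hole of radius `κt/2` within distance
`t/2`, which contains a child none of whose neighbours meets `A`. That child is charged by at
most `5 ^ d` cubes, so one refinement multiplies the count by at most `n ^ d - 5 ^ (-d) = n ^ s`
with `s < d`.

Small dimension ⟹ porous. If `B(x,r)` had no hole of radius `κr`, each point of a grid of mesh
`4κr` in `B(x,r/2)` would have a point of `E` within `κr`. These `≈ (8√d κ)^(-d)` points are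
`2κr`-separated, so no cover of `E ∩ B(x,3r/2)` by fewer `κr`-balls exists, contradicting the
bound `C (3/(2κ)) ^ s` once `κ` is small, because `s < d`.
-/

open MeasureTheory Metric

open Bornology Filter

lemma abs_sub_sub_floor_sub_floor_lt_one (a b : ℝ) : |a - b - (⌊a⌋ - ⌊b⌋ : ℝ)| < 1 := by
  rw [abs_lt]
  constructor <;>
    linarith [Int.floor_le a, Int.lt_floor_add_one a, Int.floor_le b, Int.lt_floor_add_one b]

lemma abs_ediv_sub_ediv_le_one {a b n : ℤ} (hn : 0 < n) (h : |a - b| ≤ n) :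
    |a / n - b / n| ≤ 1 := by
  have key : ∀ a b : ℤ, a - b ≤ n → a / n - b / n ≤ 1 := fun a b hab => by
    have hlt : a / n * n < (b / n + 2) * n := by
      linarith [Int.ediv_mul_le a hn.ne', Int.lt_ediv_add_one_mul_self b hn]
    linarith [lt_of_mul_lt_mul_right hlt hn.le]
  rw [abs_le] at h ⊢
  exact ⟨by linarith [key b a (by linarith)], key a b h.2⟩

lemma Finset.card_filter_le_of_encard_le {α : Type*} {s : Finset α} {P : α → Prop}
    [DecidablePred P] {N : ℕ} (h : {a ∈ (s : Set α) | P a}.encard ≤ N) : (s.filter P).card ≤ N := by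
  rwa [← Nat.cast_le (α := ℕ∞), ← Set.encard_coe_eq_coe_finsetCard, Finset.coe_filter]

/-- `G'` and the killed cells `k '' G` are disjoint subsets of the children `p⁻¹ G` of `G`. -/
theorem card_mul_add_card_le_of_kill {α β : Type*} [DecidableEq α] {p : α → β} {k : β → α}
    {G : Finset β} {G' : Finset α} {N M : ℕ}
    (hp : ∀ b, {a | p a = b}.encard ≤ N) (hk : ∀ a, {b ∈ (G : Set β) | k b = a}.encard ≤ M)
    (hpG' : ∀ a ∈ G', p a ∈ G) (hpk : ∀ b ∈ G, p (k b) ∈ G) (hkG' : ∀ b ∈ G, k b ∉ G') :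
    M * G'.card + G.card ≤ M * N * G.card := by
  classical
  have hkilled : G.card ≤ M * (G.image k).card :=
    Finset.card_le_mul_card_image_of_maps_to (fun b hb => Finset.mem_image_of_mem k hb) M
      fun a _ => Finset.card_filter_le_of_encard_le (hk a)
  have hdisj : Disjoint G' (G.image k) := by
    rw [Finset.disjoint_right]
    intro a ha
    obtain ⟨b, hb, rfl⟩ := Finset.mem_image.mp ha
    exact hkG' b hb
  have hchildren : (G' ∪ G.image k).card ≤ N * G.card := by
    refine Finset.card_le_mul_card_image_of_maps_to ?_ N fun b _ =>
      Finset.card_filter_le_of_encard_le ((Set.encard_le_encard fun a ha => ha.2).trans (hp b))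
    simp only [Finset.mem_union, Finset.mem_image]
    rintro a (ha | ⟨b, hb, rfl⟩)
    exacts [hpG' a ha, hpk b hb]
  rw [Finset.card_union_of_disjoint hdisj] at hchildren
  calc M * G'.card + G.card ≤ M * (G'.card + (G.image k).card) := by rw [mul_add]; omega
    _ ≤ M * N * G.card := by rw [mul_assoc]; exact Nat.mul_le_mul_left M hchildren

lemma EuclideanSpace.norm_le_sqrt_card_mul {ι : Type*} [Fintype ι] {v : EuclideanSpace ℝ ι}
    {a : ℝ} (ha : 0 ≤ a) (h : ∀ i, |v i| ≤ a) : ‖v‖ ≤ √(Fintype.card ι) * a := by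
  rw [EuclideanSpace.norm_eq, ← Real.sqrt_sq ha, ← Real.sqrt_mul (Nat.cast_nonneg _)]
  gcongr
  calc ∑ i, ‖v i‖ ^ 2 ≤ ∑ _i : ι, a ^ 2 :=
        Finset.sum_le_sum fun i _ => pow_le_pow_left₀ (norm_nonneg _) (h i) 2
    _ = _ := by simp

lemma pos_of_lt_mul_natCast {a κ : ℝ} (ha : 0 ≤ a) {n : ℕ} (h : a < κ * n) : 0 < n :=
  Nat.pos_of_ne_zero fun hn => by simp [hn] at h; linarith

lemma exists_rpow_eq_pow_sub_one_div_pow {d : ℕ} (hd : 1 ≤ d) {n c : ℝ} (hn : 2 ≤ n)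
    (hc : 1 < c) : ∃ s : ℝ, 0 < s ∧ s < d ∧ n ^ s = n ^ d - 1 / c ^ d := by
  have hn1 : 1 < n := by linarith
  have hnd : 2 ≤ n ^ d := hn.trans (le_self_pow₀ hn1.le (by omega))
  have hc0 : 0 < 1 / c ^ d := by positivity
  have hc1 : 1 / c ^ d < 1 := by rw [div_lt_one (by positivity)]; exact one_lt_pow₀ hc (by omega)
  refine ⟨Real.logb n (n ^ d - 1 / c ^ d), Real.logb_pos hn1 (by linarith),
    (Real.logb_lt_iff_lt_rpow hn1 (by linarith)).mpr ?_,
    Real.rpow_logb (by linarith) hn1.ne' (by linarith)⟩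
  rw [Real.rpow_natCast]
  linarith

lemma exists_finset_cover_card_le {X ι : Type*} [PseudoMetricSpace X] [Nonempty X] {A : Set X}
    {f : X → ι} {r : ℝ} (hf : ∀ a ∈ A, ∀ b ∈ A, f a = f b → dist a b < r) (hfin : (f '' A).Finite) :
    ∃ T : Finset X, ↑T ⊆ A ∧ A ⊆ ⋃ y ∈ T, ball y r ∧ T.card ≤ (f '' A).ncard := by
  classical
  refine ⟨hfin.toFinset.image (Function.invFunOn f A), ?_, fun a ha => ?_, ?_⟩
  · intro y hy
    obtain ⟨_, hm, rfl⟩ := Finset.mem_image.mp hy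
    exact Function.invFunOn_mem (by simpa using hm)
  · have hfa : ∃ b ∈ A, f b = f a := ⟨a, ha, rfl⟩
    exact Set.mem_iUnion₂.mpr ⟨_, Finset.mem_image_of_mem _ (by simpa using hfa),
      mem_ball.mpr (hf a ha _ (Function.invFunOn_mem hfa) (Function.invFunOn_eq hfa).symm)⟩
  · rw [Set.ncard_eq_toFinset_card _ hfin]
    exact Finset.card_image_le

lemma card_le_card_of_separated_of_subset_iUnion_ball {X ι : Type*} [PseudoMetricSpace X]
    [Nonempty X] {I : Finset ι} {e : ι → X} {ρ : ℝ} {T : Finset X}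
    (hsep : ∀ i ∈ I, ∀ j ∈ I, i ≠ j → 2 * ρ ≤ dist (e i) (e j))
    (hcov : ∀ i ∈ I, e i ∈ ⋃ y ∈ T, ball y ρ) : I.card ≤ T.card := by
  choose! c hcT hc using fun i hi => Set.mem_iUnion₂.mp (hcov i hi)
  refine Finset.card_le_card_of_injOn c (fun i hi => hcT i hi) fun i hi j hj hij => ?_
  by_contra hne
  have hci := mem_ball.mp (hc i hi)
  have hcj := mem_ball.mp (hc j hj)
  rw [← hij] at hcj
  linarith [hsep i hi j hj hne, dist_triangle_right (e i) (e j) (c i)]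

lemma ofReal_half_le_ediam {X : Type*} [PseudoEMetricSpace X] {E : Set X} {t R : ℝ}
    (htR : t ≤ R) (hR : ENNReal.ofReal R < 2 * ediam E) : ENNReal.ofReal (t / 2) ≤ ediam E := by
  calc ENNReal.ofReal (t / 2) ≤ ENNReal.ofReal (R / 2) := by gcongr
    _ = ENNReal.ofReal R / 2 := by rw [ENNReal.ofReal_div_of_pos two_pos, ENNReal.ofReal_ofNat]
    _ ≤ ediam E := ENNReal.div_le_of_le_mul' hR.le

lemma ofReal_lt_two_mul_ediam {X : Type*} [PseudoEMetricSpace X] {E : Set X} {r : ℝ} (hr : 0 < r)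
    (h : ENNReal.ofReal r ≤ ediam E) : ENNReal.ofReal (3 / 2 * r) < 2 * ediam E :=
  calc ENNReal.ofReal (3 / 2 * r) < ENNReal.ofReal (2 * r) :=
        (ENNReal.ofReal_lt_ofReal_iff (by positivity)).mpr (by linarith)
    _ = 2 * ENNReal.ofReal r := by rw [ENNReal.ofReal_mul zero_le_two, ENNReal.ofReal_ofNat]
    _ ≤ 2 * ediam E := by gcongr

lemma exists_nat_half_le_le {a : ℝ} (ha : 2 ≤ a) : ∃ J : ℕ, a / 2 ≤ J ∧ (J : ℝ) ≤ a :=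
  ⟨⌊a⌋₊, by linarith [Nat.sub_one_lt_floor a], Nat.floor_le (by linarith)⟩

def PorousAt {X : Type*} [PseudoMetricSpace X] (A : Set X) (κ ρ : ℝ) : Prop :=
  ∀ w ∈ A, ∃ y ∈ ball w ρ, ball y (κ * ρ) ∩ A = ∅

section Grid

variable {d : ℕ}

noncomputable def cell (t : ℝ) (z : EuclideanSpace ℝ (Fin d)) : Fin d → ℤ :=
  fun i => ⌊z i / t⌋

def parent (n : ℕ) (m : Fin d → ℤ) : Fin d → ℤ := fun i => m i / n

def box (c : Fin d → ℤ) (B : ℕ) : Set (Fin d → ℤ) := {m | ∀ i, |m i - c i| ≤ B}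

def nearCells (A : Set (EuclideanSpace ℝ (Fin d))) (t : ℝ) : Set (Fin d → ℤ) :=
  {m | ∃ w ∈ A, ∀ i, |m i - cell t w i| ≤ 1}

lemma abs_cell_sub_cell_le_ceil {t ρ : ℝ} (ht : 0 < t) {z w : EuclideanSpace ℝ (Fin d)}
    (h : ‖z - w‖ < ρ * t) (i : Fin d) : |cell t z i - cell t w i| ≤ ⌈ρ⌉₊ := by
  have hzw : |z i / t - w i / t| < ρ := by
    rw [← sub_div, abs_div, abs_of_pos ht, div_lt_iff₀ ht]
    exact (PiLp.norm_apply_le (z - w) i).trans_lt h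
  have hfloor := abs_sub_sub_floor_sub_floor_lt_one (z i / t) (w i / t)
  have hlt : ((|cell t z i - cell t w i| : ℤ) : ℝ) < ⌈ρ⌉₊ + 1 := by
    rw [abs_lt] at hzw hfloor
    push_cast [cell, abs_lt]
    constructor <;> linarith [Nat.le_ceil ρ]
  exact Int.lt_add_one_iff.mp (by exact_mod_cast hlt)

lemma norm_sub_le_of_abs_cell_sub_cell_le {t : ℝ} (ht : 0 < t) {z w : EuclideanSpace ℝ (Fin d)}
    (k : ℕ) (h : ∀ i, |cell t z i - cell t w i| ≤ k) : ‖z - w‖ ≤ √d * ((k + 1) * t) := by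
  simpa using EuclideanSpace.norm_le_sqrt_card_mul (v := z - w) (by positivity) fun i => by
    have hfloor := abs_sub_sub_floor_sub_floor_lt_one (z i / t) (w i / t)
    have hk : ((|cell t z i - cell t w i| : ℤ) : ℝ) ≤ k := by exact_mod_cast h i
    push_cast [cell] at hk
    rw [PiLp.sub_apply, ← div_le_iff₀ ht, ← abs_of_pos ht, ← abs_div, sub_div]
    rw [abs_lt] at hfloor
    rw [abs_le] at hk ⊢
    constructor <;> linarith

lemma parent_cell {n : ℕ} (hn : n ≠ 0) (t : ℝ) (z : EuclideanSpace ℝ (Fin d)) :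
    parent n (cell (t / n) z) = cell t z := by
  funext i
  rw [parent, cell, cell, ← Int.floor_div_natCast]
  congr 1
  field_simp

lemma abs_parent_sub_parent_le_one {n : ℕ} (hn : 0 < n) {m m' : Fin d → ℤ}
    (h : ∀ i, |m i - m' i| ≤ 1) (i : Fin d) : |parent n m i - parent n m' i| ≤ 1 :=
  abs_ediv_sub_ediv_le_one (by exact_mod_cast hn) ((h i).trans (by exact_mod_cast hn))

lemma encard_parent_fiber_le {n : ℕ} (hn : 0 < n) (q : Fin d → ℤ) :
    {m | parent n m = q}.encard ≤ (n ^ d : ℕ) := by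
  classical
  have hn' : (0 : ℤ) < n := by exact_mod_cast hn
  have hsub : {m | parent n m = q} ⊆
      ↑(Fintype.piFinset fun i => Finset.Ico (q i * n) (q i * n + n)) := by
    rintro m rfl
    simp only [Fintype.coe_piFinset, Set.mem_pi, Set.mem_univ, Finset.coe_Ico, Set.mem_Ico,
      forall_const, parent]
    exact fun i => ⟨Int.ediv_mul_le _ hn'.ne', by linarith [Int.lt_ediv_add_one_mul_self (m i) hn']⟩
  refine (Set.encard_le_encard hsub).trans ?_
  rw [Set.encard_coe_eq_coe_finsetCard, Fintype.card_piFinset]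
  simp

lemma box_eq_coe_piFinset (c : Fin d → ℤ) (B : ℕ) :
    box c B = ↑(Fintype.piFinset fun i => Finset.Icc (c i - B) (c i + B)) := by
  ext m
  simp only [box, Set.mem_ofPred_eq, Fintype.coe_piFinset, Set.mem_pi, Set.mem_univ,
    Finset.coe_Icc, Set.mem_Icc, forall_const, abs_le]
  exact forall_congr' fun i => by omega

lemma box_finite (c : Fin d → ℤ) (B : ℕ) : (box c B).Finite := by
  rw [box_eq_coe_piFinset]
  exact Finset.finite_toSet _

lemma ncard_box (c : Fin d → ℤ) (B : ℕ) : (box c B).ncard = (2 * B + 1) ^ d := by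
  rw [box_eq_coe_piFinset, Set.ncard_coe_finset, Fintype.card_piFinset]
  have hside : ∀ i, (Finset.Icc (c i - B) (c i + B)).card = 2 * B + 1 := fun i => by
    rw [Int.card_Icc]; omega
  simp [hside]

lemma nearCells_subset_box {A : Set (EuclideanSpace ℝ (Fin d))} {x : EuclideanSpace ℝ (Fin d)}
    {ρ t : ℝ} (ht : 0 < t) (hA : A ⊆ ball x ρ) : nearCells A t ⊆ box (cell t x) (⌈ρ / t⌉₊ + 1) := by
  rintro m ⟨w, hw, hm⟩ i
  have hwx := abs_cell_sub_cell_le_ceil ht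
    (by rw [div_mul_cancel₀ _ ht.ne']; exact mem_ball_iff_norm.mp (hA hw)) i
  push_cast
  linarith [abs_sub_le (m i) (cell t w i) (cell t x i), hm i]

lemma nearCells_finite {A : Set (EuclideanSpace ℝ (Fin d))} (hA : IsBounded A) {t : ℝ}
    (ht : 0 < t) : (nearCells A t).Finite := by
  obtain ⟨ρ, hρ⟩ := (isBounded_iff_subset_ball 0).mp hA
  exact (box_finite _ _).subset (nearCells_subset_box ht hρ)

lemma parent_mem_nearCells {A : Set (EuclideanSpace ℝ (Fin d))} {t : ℝ} {n : ℕ} (hn : 0 < n)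
    {m : Fin d → ℤ} (hm : m ∈ nearCells A (t / n)) : parent n m ∈ nearCells A t := by
  obtain ⟨w, hw, hmw⟩ := hm
  exact ⟨w, hw, fun i => parent_cell hn.ne' t w ▸ abs_parent_sub_parent_le_one hn hmw i⟩

lemma exists_killed_child {A : Set (EuclideanSpace ℝ (Fin d))} {κ t : ℝ} (ht : 0 < t) {n : ℕ}
    (hn : 4 * √d < κ * n) (hhole : PorousAt A κ (t / 2))
    {m : Fin d → ℤ} (hm : m ∈ nearCells A t) :
    ∃ c ∉ nearCells A (t / n), parent n c ∈ nearCells A t ∧ ∀ i, |m i - parent n c i| ≤ 2 := by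
  have hn0 : 0 < n := pos_of_lt_mul_natCast (by positivity) hn
  obtain ⟨w, hw, hmw⟩ := hm
  obtain ⟨y, hy, hyA⟩ := hhole w hw
  have hyw : ∀ i, |cell t y i - cell t w i| ≤ 1 := fun i => by
    simpa using abs_cell_sub_cell_le_ceil ht (ρ := 1)
      (by rw [one_mul]; linarith [mem_ball_iff_norm.mp hy]) i
  refine ⟨cell (t / n) y, ?_, ?_, fun i => ?_⟩
  · rintro ⟨w', hw', hw'y⟩
    have hclose : ‖w' - y‖ ≤ √d * (((1 : ℕ) + 1) * (t / n)) :=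
      norm_sub_le_of_abs_cell_sub_cell_le (by positivity) 1 fun i => by
        rw [abs_sub_comm]; exact_mod_cast hw'y i
    have hsmall : √d * (((1 : ℕ) + 1) * (t / n)) < κ * (t / 2) := by
      have hn' : (0 : ℝ) < n := by exact_mod_cast hn0
      rw [show √d * (((1 : ℕ) + 1) * (t / n)) = 4 * √d * t / (2 * n) by push_cast; field_simp; ring,
        div_lt_iff₀ (by positivity)]
      nlinarith
    exact hyA.subset ⟨mem_ball_iff_norm.mpr (hclose.trans_lt hsmall), hw'⟩
  · rw [parent_cell hn0.ne']
    exact ⟨w, hw, hyw⟩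
  · rw [parent_cell hn0.ne']
    linarith [abs_sub_le (m i) (cell t w i) (cell t y i), hmw i, hyw i,
      abs_sub_comm (cell t w i) (cell t y i)]

lemma porous_step {A : Set (EuclideanSpace ℝ (Fin d))} (hA : IsBounded A) {κ t : ℝ} (ht : 0 < t)
    {n : ℕ} (hn : 4 * √d < κ * n)
    (hhole : PorousAt A κ (t / 2)) :
    5 ^ d * (nearCells A (t / n)).ncard + (nearCells A t).ncard ≤
      5 ^ d * n ^ d * (nearCells A t).ncard := by
  classical
  have hn0 : 0 < n := pos_of_lt_mul_natCast (by positivity) hn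
  have hG := nearCells_finite hA ht
  have hG' := nearCells_finite hA (t := t / n) (by positivity)
  choose! kill hkill_not hkill_parent hkill_near using
    fun m (hm : m ∈ nearCells A t) => exists_killed_child ht hn hhole hm
  rw [Set.ncard_eq_toFinset_card _ hG, Set.ncard_eq_toFinset_card _ hG']
  refine card_mul_add_card_le_of_kill (p := parent n) (k := kill) (encard_parent_fiber_le hn0)
    (fun c => ?_) (fun m hm => ?_) (fun m hm => ?_) (fun m hm => ?_)
  · calc {m ∈ (hG.toFinset : Set _) | kill m = c}.encard ≤ (box (parent n c) 2).encard := by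
          refine Set.encard_le_encard ?_
          rintro m ⟨hm, rfl⟩
          exact hkill_near m (by simpa using hm)
      _ = ((5 ^ d : ℕ) : ℕ∞) := by rw [← (box_finite _ _).cast_ncard_eq, ncard_box]
  · simpa using parent_mem_nearCells hn0 (by simpa using hm)
  · simpa using hkill_parent m (by simpa using hm)
  · simpa using hkill_not m (by simpa using hm)

lemma ncard_nearCells_le {A : Set (EuclideanSpace ℝ (Fin d))} {x : EuclideanSpace ℝ (Fin d)}
    {R κ : ℝ} (hR : 0 < R) (hA : A ⊆ ball x R) {n : ℕ} (hn : 4 * √d < κ * n)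
    (hhole : ∀ t ∈ Set.Ioc 0 R, PorousAt A κ (t / 2))
    (k : ℕ) : ((nearCells A (R / n ^ k)).ncard : ℝ) ≤ 5 ^ d * (n ^ d - 1 / 5 ^ d) ^ k := by
  have hn0 : 0 < n := pos_of_lt_mul_natCast (by positivity) hn
  have hn1 : (1 : ℝ) ≤ n := by exact_mod_cast hn0
  induction k with
  | zero =>
    have hbox := nearCells_subset_box hR hA
    rw [div_self hR.ne', Nat.ceil_one] at hbox
    have hcard := Set.ncard_le_ncard hbox (box_finite _ _)
    rw [ncard_box] at hcard
    norm_num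
    exact_mod_cast hcard
  | succ k ih =>
    set t := R / n ^ k
    have ht : 0 < t := by positivity
    have hstep := porous_step (isBounded_ball.subset hA) ht hn
      (hhole t ⟨ht, div_le_self hR.le (one_le_pow₀ hn1)⟩)
    have htn : R / (n : ℝ) ^ (k + 1) = t / n := by rw [pow_succ, div_div]
    have h5 : (0 : ℝ) < 5 ^ d := by positivity
    have hθ : 0 ≤ (n : ℝ) ^ d - 1 / 5 ^ d := by
      rw [sub_nonneg, div_le_iff₀ h5]
      nlinarith [one_le_pow₀ hn1 (n := d), one_le_pow₀ (show (1 : ℝ) ≤ 5 by norm_num) (n := d)]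
    rw [htn]
    calc ((nearCells A (t / n)).ncard : ℝ) ≤ (n ^ d - 1 / 5 ^ d) * (nearCells A t).ncard := by
          rw [sub_mul, le_sub_iff_add_le, ← mul_le_mul_iff_of_pos_left h5]
          have hstep' : (5 ^ d : ℝ) * (nearCells A (t / n)).ncard + (nearCells A t).ncard ≤
              5 ^ d * n ^ d * (nearCells A t).ncard := by exact_mod_cast hstep
          field_simp
          linarith
      _ ≤ 5 ^ d * (n ^ d - 1 / 5 ^ d) ^ (k + 1) := by
          rw [pow_succ]
          nlinarith [mul_le_mul_of_nonneg_left ih hθ]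

lemma exists_finset_cover_card_le_ncard_nearCells {A : Set (EuclideanSpace ℝ (Fin d))}
    (hA : IsBounded A) {r t : ℝ} (ht : 0 < t) (hr : √d * t < r) :
    ∃ T : Finset (EuclideanSpace ℝ (Fin d)), ↑T ⊆ A ∧ A ⊆ ⋃ y ∈ T, ball y r ∧
      T.card ≤ (nearCells A t).ncard := by
  have hcells : cell t '' A ⊆ nearCells A t := by
    rintro _ ⟨w, hw, rfl⟩
    exact ⟨w, hw, fun i => by simp⟩
  obtain ⟨T, hTA, hcover, hcard⟩ := exists_finset_cover_card_le (f := cell t) (r := r)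
    (fun a _ b _ hab => by
      rw [dist_eq_norm]
      refine (norm_sub_le_of_abs_cell_sub_cell_le ht 0 fun i => by simp [hab]).trans_lt ?_
      simpa using hr)
    ((nearCells_finite hA ht).subset hcells)
  exact ⟨T, hTA, hcover, hcard.trans (Set.ncard_le_ncard hcells (nearCells_finite hA ht))⟩

lemma exists_finset_cover_of_holes (hd : 1 ≤ d) {A : Set (EuclideanSpace ℝ (Fin d))}
    {x : EuclideanSpace ℝ (Fin d)} {r R κ : ℝ} (hr : 0 < r) (hrR : r < R) (hA : A ⊆ ball x R)
    {n : ℕ} (hn1 : 1 < n) (hn : 4 * √d < κ * n)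
    (hhole : ∀ t ∈ Set.Ioc 0 R, PorousAt A κ (t / 2))
    {s : ℝ} (hs0 : 0 ≤ s) (hsd : s ≤ d) (hns : (n : ℝ) ^ s = n ^ d - 1 / 5 ^ d) :
    ∃ T : Finset (EuclideanSpace ℝ (Fin d)), ↑T ⊆ A ∧ A ⊆ ⋃ y ∈ T, ball y r ∧
      (T.card : ℝ) ≤ 5 ^ d * (n * √d) ^ d * (R / r) ^ s := by
  have hsd1 : 1 ≤ √d := Real.one_le_sqrt.mpr (by exact_mod_cast hd)
  have hn1' : (1 : ℝ) < n := by exact_mod_cast hn1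
  have hR : 0 < R := hr.trans hrR
  have hnsd : 1 ≤ (n : ℝ) * √d := one_le_mul_of_one_le_of_one_le hn1'.le hsd1
  obtain ⟨k, hk, hk'⟩ := exists_nat_pow_near (x := √d * R / r)
    (by rw [le_div_iff₀ hr, one_mul]; nlinarith) hn1'
  obtain ⟨T, hTA, hcover, hcard⟩ := exists_finset_cover_card_le_ncard_nearCells
    (isBounded_ball.subset hA) (t := R / n ^ (k + 1)) (r := r) (by positivity)
    (by rw [← mul_div_assoc, div_lt_iff₀ (by positivity)]; rw [div_lt_iff₀ hr] at hk'; linarith)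
  refine ⟨T, hTA, hcover, ?_⟩
  calc (T.card : ℝ) ≤ (nearCells A (R / n ^ (k + 1))).ncard := by exact_mod_cast hcard
    _ ≤ 5 ^ d * (n ^ d - 1 / 5 ^ d) ^ (k + 1) := ncard_nearCells_le hR hA hn hhole (k + 1)
    _ = 5 ^ d * ((n : ℝ) ^ (k + 1)) ^ s := by rw [← hns, Real.rpow_pow_comm (by positivity)]
    _ ≤ 5 ^ d * (n * √d * (R / r)) ^ s := by
        gcongr
        rw [pow_succ, mul_comm, mul_assoc, ← mul_div_assoc]
        gcongr
    _ ≤ 5 ^ d * ((n * √d) ^ d * (R / r) ^ s) := by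
        rw [Real.mul_rpow (by positivity) (by positivity), ← Real.rpow_natCast (n * √d) d]
        gcongr
    _ = 5 ^ d * (n * √d) ^ d * (R / r) ^ s := by ring

theorem exists_assouad_bound_of_porous (hd : 1 ≤ d) {E : Set (EuclideanSpace ℝ (Fin d))}
    {κ : ℝ} (hκ : 0 < κ)
    (hpor : ∀ x ∈ E, ∀ r : ℝ, 0 < r → ENNReal.ofReal r ≤ ediam E →
      ∃ y ∈ ball x r, ball y (κ * r) ∩ E = ∅) :
    ∃ C s : ℝ, 1 ≤ C ∧ 0 < s ∧ s < d ∧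
      ∀ x ∈ E, ∀ r R : ℝ, 0 < r → r < R → ENNReal.ofReal R < 2 * ediam E →
        ∃ T : Finset (EuclideanSpace ℝ (Fin d)), ↑T ⊆ E ∧
          E ∩ ball x R ⊆ ⋃ y ∈ T, ball y r ∧ (T.card : ℝ) ≤ C * (R / r) ^ s := by
  have hsd1 : 1 ≤ √d := Real.one_le_sqrt.mpr (by exact_mod_cast hd)
  obtain ⟨n, hn⟩ := exists_nat_gt (max 1 (4 * √d / κ))
  have hn1 : 1 < n := by exact_mod_cast (le_max_left _ _).trans_lt hn
  have hnκ : 4 * √d < κ * n := by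
    rw [← div_lt_iff₀' hκ]; exact (le_max_right _ _).trans_lt hn
  obtain ⟨s, hs0, hsd, hns⟩ :=
    exists_rpow_eq_pow_sub_one_div_pow hd (n := n) (c := 5) (by exact_mod_cast hn1) (by norm_num)
  refine ⟨5 ^ d * (n * √d) ^ d, s, one_le_mul_of_one_le_of_one_le (one_le_pow₀ (by norm_num))
    (one_le_pow₀ (one_le_mul_of_one_le_of_one_le (by exact_mod_cast hn1.le) hsd1)), hs0, hsd,
    fun x _ r R hr hrR hRE => ?_⟩
  have hholes : ∀ t ∈ Set.Ioc 0 R, PorousAt (E ∩ ball x R) κ (t / 2) := fun t ht w hw => by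
    obtain ⟨y, hy, hyE⟩ := hpor w hw.1 (t / 2) (by linarith [ht.1]) (ofReal_half_le_ediam ht.2 hRE)
    exact ⟨y, hy, Set.subset_eq_empty (Set.inter_subset_inter_right _ Set.inter_subset_left) hyE⟩
  obtain ⟨T, hTA, hcover, hcard⟩ := exists_finset_cover_of_holes hd hr hrR Set.inter_subset_right
    hn1 hnκ hholes hs0.le hsd.le hns
  exact ⟨T, hTA.trans Set.inter_subset_left, hcover, hcard⟩

lemma exists_grid (x : EuclideanSpace ℝ (Fin d)) {h : ℝ} (hh : 0 ≤ h) (J : ℕ) :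
    ∃ z : (Fin d → Fin J) → EuclideanSpace ℝ (Fin d),
      (∀ j, ‖z j - x‖ ≤ √d * (h * J)) ∧ ∀ j j', j ≠ j' → h ≤ dist (z j) (z j') := by
  refine ⟨fun j => x + h • WithLp.toLp 2 fun i => ((j i : ℕ) : ℝ), fun j => ?_, fun j j' hjj' => ?_⟩
  · rw [add_sub_cancel_left, norm_smul, Real.norm_of_nonneg hh, mul_left_comm]
    gcongr
    simpa using EuclideanSpace.norm_le_sqrt_card_mul (v := WithLp.toLp 2 fun i => ((j i : ℕ) : ℝ))
      (Nat.cast_nonneg J) fun i => by simp [(j i).isLt.le]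
  · obtain ⟨i, hi⟩ := Function.ne_iff.mp hjj'
    have hji : (1 : ℝ) ≤ |((j i : ℕ) : ℝ) - (j' i : ℕ)| := by
      have : (1 : ℤ) ≤ |((j i : ℕ) : ℤ) - (j' i : ℕ)| := Int.one_le_abs (by omega)
      exact_mod_cast this
    calc h ≤ h * |((j i : ℕ) : ℝ) - (j' i : ℕ)| := le_mul_of_one_le_right hh hji
      _ = ‖(x + h • WithLp.toLp 2 fun i => ((j i : ℕ) : ℝ)) -
            (x + h • WithLp.toLp 2 fun i => ((j' i : ℕ) : ℝ)) |>.ofLp i‖ := by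
          simp only [add_sub_add_left_eq_sub, PiLp.sub_apply, PiLp.smul_apply, smul_eq_mul,
            Real.norm_eq_abs]
          rw [← mul_sub, abs_mul, abs_of_nonneg hh]
      _ ≤ _ := (PiLp.norm_apply_le _ i).trans_eq (dist_eq_norm _ _).symm

lemma pow_le_card_of_forall_ball_inter_nonempty {E : Set (EuclideanSpace ℝ (Fin d))}
    {x : EuclideanSpace ℝ (Fin d)} {r κ : ℝ} (hr : 0 < r) (hκ : 0 < κ) (hκ1 : κ ≤ 1) {J : ℕ}
    (hJ : 8 * √d * κ * J ≤ 1) (hfull : ∀ y ∈ ball x r, (ball y (κ * r) ∩ E).Nonempty)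
    {T : Finset (EuclideanSpace ℝ (Fin d))}
    (hT : E ∩ ball x (3 / 2 * r) ⊆ ⋃ y ∈ T, ball y (κ * r)) :
    J ^ d ≤ T.card := by
  obtain ⟨z, hzx, hzsep⟩ := exists_grid x (h := 4 * κ * r) (by positivity) J
  have hz : ∀ j, dist (z j) x ≤ r / 2 := fun j => by
    rw [dist_eq_norm]
    nlinarith [hzx j]
  choose e he using fun j => hfull (z j) (mem_ball.mpr ((hz j).trans_lt (by linarith)))
  have hcard := card_le_card_of_separated_of_subset_iUnion_ball (I := Finset.univ) (e := e)
    (ρ := κ * r) (T := T) (fun j _ j' _ hjj' => ?_) (fun j _ => hT ⟨(he j).2, ?_⟩)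
  · simpa using hcard
  · have := hzsep j j' hjj'
    linarith [mem_ball'.mp (he j).1, mem_ball.mp (he j').1,
      dist_triangle4 (z j) (e j) (e j') (z j')]
  · rw [mem_ball]
    nlinarith [mem_ball.mp (he j).1, hz j, dist_triangle (e j) (z j) x]

lemma exists_hole_of_card_lt (hd : 1 ≤ d) {E : Set (EuclideanSpace ℝ (Fin d))}
    {x : EuclideanSpace ℝ (Fin d)} {r u : ℝ} (hr : 0 < r) (hu : 16 * √d ≤ u)
    {T : Finset (EuclideanSpace ℝ (Fin d))}
    (hT : E ∩ ball x (3 / 2 * r) ⊆ ⋃ y ∈ T, ball y (u⁻¹ * r))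
    (hTcard : (T.card : ℝ) < (u / (16 * √d)) ^ d) : ∃ y ∈ ball x r, ball y (u⁻¹ * r) ∩ E = ∅ := by
  have hsd1 : 1 ≤ √d := Real.one_le_sqrt.mpr (by exact_mod_cast hd)
  have hu0 : 0 < u := by linarith
  by_contra! hfull
  obtain ⟨J, hJl, hJu⟩ := exists_nat_half_le_le (a := u / (8 * √d))
    (by rw [le_div_iff₀ (by positivity)]; linarith)
  have hJ : 8 * √d * u⁻¹ * J ≤ 1 := by
    rw [le_div_iff₀ (by positivity)] at hJu
    calc 8 * √d * u⁻¹ * J = J * (8 * √d) / u := by ring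
      _ ≤ 1 := (div_le_one hu0).mpr hJu
  have hJT := pow_le_card_of_forall_ball_inter_nonempty hr (inv_pos.mpr hu0)
    (inv_le_one_of_one_le₀ (by linarith)) hJ hfull hT
  have hJd : (u / (16 * √d)) ^ d ≤ T.card := calc
    (u / (16 * √d)) ^ d ≤ (J : ℝ) ^ d := by
        gcongr
        calc u / (16 * √d) = u / (8 * √d) / 2 := by ring
          _ ≤ J := hJl
    _ ≤ T.card := by exact_mod_cast hJT
  linarith

theorem porous_of_assouad_bound (hd : 1 ≤ d) {E : Set (EuclideanSpace ℝ (Fin d))}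
    {C s : ℝ} (hsd : s < d)
    (hcov : ∀ x ∈ E, ∀ r R : ℝ, 0 < r → r < R → ENNReal.ofReal R < 2 * ediam E →
      ∃ T : Finset (EuclideanSpace ℝ (Fin d)), ↑T ⊆ E ∧
        E ∩ ball x R ⊆ ⋃ y ∈ T, ball y r ∧ (T.card : ℝ) ≤ C * (R / r) ^ s) :
    ∃ κ : ℝ, 0 < κ ∧ κ ≤ 1 ∧ ∀ x ∈ E, ∀ r : ℝ, 0 < r → ENNReal.ofReal r ≤ ediam E →
      ∃ y ∈ ball x r, ball y (κ * r) ∩ E = ∅ := by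
  have hsd1 : 1 ≤ √d := Real.one_le_sqrt.mpr (by exact_mod_cast hd)
  obtain ⟨u, hK, hu⟩ : ∃ u : ℝ, C * (3 / 2) ^ s * (16 * √d) ^ d < u ^ ((d : ℝ) - s) ∧
      16 * √d ≤ u :=
    (((tendsto_rpow_atTop (sub_pos.mpr hsd)).eventually_gt_atTop _).and
      (eventually_ge_atTop _)).exists
  have hu0 : 0 < u := by linarith
  have hu1 : u⁻¹ ≤ 1 := inv_le_one_of_one_le₀ (by linarith)
  have hgrowth : C * (3 / 2) ^ s * u ^ s < (u / (16 * √d)) ^ d := by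
    rw [div_pow, lt_div_iff₀ (by positivity)]
    calc C * (3 / 2) ^ s * u ^ s * (16 * √d) ^ d = C * (3 / 2) ^ s * (16 * √d) ^ d * u ^ s := by
          ring
      _ < u ^ ((d : ℝ) - s) * u ^ s := mul_lt_mul_of_pos_right hK (Real.rpow_pos_of_pos hu0 s)
      _ = u ^ d := by rw [← Real.rpow_add hu0, sub_add_cancel, Real.rpow_natCast]
  refine ⟨u⁻¹, inv_pos.mpr hu0, hu1, fun x hx r hr hrE => ?_⟩
  obtain ⟨T, -, hTcov, hTcard⟩ := hcov x hx (u⁻¹ * r) (3 / 2 * r) (by positivity)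
    (by nlinarith) (ofReal_lt_two_mul_ediam hr hrE)
  refine exists_hole_of_card_lt hd hr hu hTcov (hTcard.trans_lt ?_)
  rwa [show 3 / 2 * r / (u⁻¹ * r) = 3 / 2 * u by field_simp,
    Real.mul_rpow (by norm_num) hu0.le, ← mul_assoc]

end Grid

/-- A set `E ⊆ ℝ^d` is uniformly porous if and only if its upper Assouad dimension is
strictly less than `d`, the latter being expressed through covering counts: there are
`C ≥ 1` and `s ∈ (0,d)` such that for all `x ∈ E` and `0 < r < R < 2 diam E` the set
`E ∩ B(x,R)` can be covered by at most `C (R/r)^s` balls of radius `r` centered in `E`. -/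
theorem uniformly_porous_iff_assouad_lt_dim (d : ℕ) (hd : 1 ≤ d)
    (E : Set (EuclideanSpace ℝ (Fin d))) :
    (∃ κ : ℝ, 0 < κ ∧ κ ≤ 1 ∧ ∀ x ∈ E, ∀ r : ℝ, 0 < r → ENNReal.ofReal r ≤ EMetric.diam E →
      ∃ y ∈ ball x r, ball y (κ * r) ∩ E = ∅) ↔
    (∃ C s : ℝ, 1 ≤ C ∧ 0 < s ∧ s < d ∧
      ∀ x ∈ E, ∀ r R : ℝ, 0 < r → r < R → ENNReal.ofReal R < 2 * EMetric.diam E →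
        ∃ T : Finset (EuclideanSpace ℝ (Fin d)),
          (T : Set (EuclideanSpace ℝ (Fin d))) ⊆ E ∧
          E ∩ ball x R ⊆ ⋃ y ∈ T, ball y r ∧ (T.card : ℝ) ≤ C * (R / r) ^ s) :=
  ⟨fun ⟨_, hκ, _, hpor⟩ => exists_assouad_bound_of_porous hd hκ hpor,
    fun ⟨_, _, _, _, hsd, hcov⟩ => porous_of_assouad_bound hd hsd hcov⟩
end

section
/- Let 0 < ℓ < d and let O ⊆ ℝ^d be an open set whose boundary ∂O is ℓ-regular. Then for every t ∈ (0, min{1, d−ℓ}) the set O is of class D^t, i.e. sup over x ∈ ∂O and 0 < r ≤ 1 of r^{t−d} · ∫_{B(x,r) \ ∂O} dist(y, ∂O)^{−t} dy is finite. In particular, if ∂O is (d−1)-regular, then O is of class D^t for every t ∈ (0,1). -/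
/-!
Cover `cthickening s ∂O ∩ ball x r` (`s ≤ r ≤ 1`) by the `4s`-enlargements of a Vitali family of
disjoint `s`-balls centred on `∂O ∩ ball x (2r)`. Each of those balls carries boundary measure
`≥ a s^ℓ`, while together they lie in `ball x (3r)`, whose boundary measure is `≲ r^ℓ` by upper
regularity. So there are `≲ (r/s)^ℓ` of them and the volume of the `s`-neighbourhood of `∂O` in
`ball x r` is `≲ r^ℓ s^(d-ℓ)`. Slicing `ball x r \ ∂O` into the dyadic layers
`r/2^(k+1) < dist(·, ∂O) ≤ r/2^k` then bounds the integral of `dist(·, ∂O)^(-t)` by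
`r^(d-t) ∑ₖ 2^(k(t-(d-ℓ)))`, a geometric series that converges because `t < d - ℓ`.
-/

open MeasureTheory Metric Module

theorem exists_dyadic_le_of_pos_of_le {v r : ℝ} (hv : 0 < v) (hvr : v ≤ r) :
    ∃ k : ℕ, r / 2 ^ (k + 1) < v ∧ v ≤ r / 2 ^ k := by
  obtain ⟨k, hk, hk'⟩ := exists_nat_pow_near ((one_le_div hv).2 hvr) one_lt_two
  exact ⟨k, (div_lt_iff₀ (by positivity)).2 (by rwa [div_lt_iff₀ hv, mul_comm] at hk'),
    (le_div_iff₀ (by positivity)).2 (by rwa [le_div_iff₀ hv, mul_comm] at hk)⟩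

theorem setLIntegral_rpow_neg_le_of_measure_le {α : Type*} [MeasurableSpace α]
    {μ : Measure α} {f : α → ENNReal} {A : Set α} {C σ t r : ℝ}
    (ht : 0 < t) (htσ : t < σ) (hr : 0 < r)
    (hf0 : ∀ y ∈ A, f y ≠ 0) (hfr : ∀ y ∈ A, f y ≤ ENNReal.ofReal r)
    (hμ : ∀ s, 0 < s → s ≤ r →
      μ ({y | f y ≤ ENNReal.ofReal s} ∩ A) ≤ ENNReal.ofReal (C * s ^ σ)) :
    ∫⁻ y in A, f y ^ (-t) ∂μ ≤
      ENNReal.ofReal (2 ^ t * C / (1 - 2 ^ (t - σ)) * r ^ (σ - t)) := by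
  set q : ℝ := 2 ^ (t - σ)
  have hq0 : 0 ≤ q := by positivity
  have hq1 : q < 1 := Real.rpow_lt_one_of_one_lt_of_neg one_lt_two (by linarith)
  set S : ℕ → Set α := fun k =>
    {y | f y ≤ ENNReal.ofReal (r / 2 ^ k)} ∩ A ∩ {y | ENNReal.ofReal (r / 2 ^ (k + 1)) < f y}
  have hcover : A ⊆ ⋃ k, S k := by
    intro y hy
    have hfy : f y ≠ ⊤ := ne_top_of_le_ne_top ENNReal.ofReal_ne_top (hfr y hy)
    obtain ⟨k, hlow, hup⟩ := exists_dyadic_le_of_pos_of_le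
      (ENNReal.toReal_pos (hf0 y hy) hfy) (ENNReal.toReal_le_of_le_ofReal hr.le (hfr y hy))
    refine Set.mem_iUnion.2 ⟨k, ⟨?_, hy⟩, ?_⟩
    · exact (ENNReal.le_ofReal_iff_toReal_le hfy (by positivity)).2 hup
    · exact (ENNReal.ofReal_lt_iff_lt_toReal (by positivity) hfy).2 hlow
  have hannulus : ∀ k : ℕ, ∫⁻ y in S k, f y ^ (-t) ∂μ ≤
      ENNReal.ofReal (2 ^ t * C * r ^ (σ - t)) * ENNReal.ofReal q ^ k := by
    intro k
    have hρ : (0 : ℝ) < r / 2 ^ (k + 1) := by positivity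
    have hpt : ∀ y ∈ S k, f y ^ (-t) ≤ ENNReal.ofReal ((r / 2 ^ (k + 1)) ^ (-t)) := by
      intro y hy
      rw [← ENNReal.ofReal_rpow_of_pos hρ, ENNReal.rpow_neg, ENNReal.rpow_neg]
      exact ENNReal.inv_le_inv' (ENNReal.rpow_le_rpow hy.2.le ht.le)
    have hidentity : (r / 2 ^ (k + 1)) ^ (-t) * (C * (r / 2 ^ k) ^ σ) =
        2 ^ t * C * r ^ (σ - t) * q ^ k := by
      have h2 : (0 : ℝ) < 2 ^ k := by positivity
      rw [pow_succ, Real.div_rpow hr.le (by positivity), Real.div_rpow hr.le h2.le,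
        Real.mul_rpow h2.le zero_le_two, Real.rpow_pow_comm zero_le_two, Real.rpow_sub hr,
        Real.rpow_sub h2, Real.rpow_neg hr.le, Real.rpow_neg (by positivity),
        Real.rpow_neg zero_le_two]
      field_simp
    calc ∫⁻ y in S k, f y ^ (-t) ∂μ
        ≤ ∫⁻ _ in S k, ENNReal.ofReal ((r / 2 ^ (k + 1)) ^ (-t)) ∂μ :=
          setLIntegral_mono measurable_const hpt
      _ = ENNReal.ofReal ((r / 2 ^ (k + 1)) ^ (-t)) * μ (S k) := setLIntegral_const _ _
      _ ≤ ENNReal.ofReal ((r / 2 ^ (k + 1)) ^ (-t)) *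
            ENNReal.ofReal (C * (r / 2 ^ k) ^ σ) := by
          gcongr
          exact (measure_mono Set.inter_subset_left).trans
            (hμ _ (by positivity) (div_le_self hr.le (one_le_pow₀ one_le_two)))
      _ = ENNReal.ofReal (2 ^ t * C * r ^ (σ - t)) * ENNReal.ofReal q ^ k := by
          rw [← ENNReal.ofReal_mul (by positivity), hidentity,
            ENNReal.ofReal_mul' (by positivity), ENNReal.ofReal_pow hq0]
  calc ∫⁻ y in A, f y ^ (-t) ∂μ
      ≤ ∫⁻ y in ⋃ k, S k, f y ^ (-t) ∂μ := lintegral_mono_set hcover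
    _ ≤ ∑' k, ∫⁻ y in S k, f y ^ (-t) ∂μ := lintegral_iUnion_le _ _
    _ ≤ ∑' k : ℕ, ENNReal.ofReal (2 ^ t * C * r ^ (σ - t)) * ENNReal.ofReal q ^ k :=
        ENNReal.tsum_le_tsum hannulus
    _ = ENNReal.ofReal (2 ^ t * C / (1 - q) * r ^ (σ - t)) := by
        rw [ENNReal.tsum_mul_left, ENNReal.tsum_geometric, ← ENNReal.ofReal_one,
          ← ENNReal.ofReal_sub 1 hq0, ← ENNReal.ofReal_inv_of_pos (by linarith),
          ← ENNReal.ofReal_mul' (by simp only [inv_nonneg]; linarith)]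
        congr 1
        ring

theorem exists_finset_covering_enlargement_card_le {X : Type*} [MetricSpace X]
    [MeasurableSpace X] [OpensMeasurableSpace X] {ν : Measure X} {F T : Set X}
    (hF : MeasurableSet F) {s m M : ℝ} (hm : 0 < m) (hM : 0 ≤ M)
    (hlow : ∀ z ∈ T, ENNReal.ofReal m ≤ ν (ball z s ∩ F))
    (hup : ν ((⋃ z ∈ T, ball z s) ∩ F) ≤ ENNReal.ofReal M) :
    ∃ u : Finset X, (u.card : ℝ) * m ≤ M ∧
      ∀ z ∈ T, closedBall z s ⊆ ⋃ w ∈ u, closedBall w (4 * s) := by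
  obtain ⟨u, huT, hdisj, hcov⟩ :=
    Vitali.exists_disjoint_subfamily_covering_enlargement_closedBall T id (fun _ => s) s
      (fun _ _ => le_rfl) 4 (by norm_num)
  have hcard : ∀ v : Finset X, ↑v ⊆ u → (v.card : ℝ) * m ≤ M := by
    intro v hvu
    have hvdisj : (v : Set X).PairwiseDisjoint fun z => ball z s ∩ F :=
      (hdisj.subset hvu).mono fun z => Set.inter_subset_left.trans ball_subset_closedBall
    have hsum : ∑ _z ∈ v, ENNReal.ofReal m ≤ ENNReal.ofReal M :=
      calc ∑ _z ∈ v, ENNReal.ofReal m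
          ≤ ∑ z ∈ v, ν (ball z s ∩ F) :=
            Finset.sum_le_sum fun z hz => hlow z (huT (hvu hz))
        _ = ν (⋃ z ∈ v, ball z s ∩ F) :=
          (measure_biUnion_finset hvdisj fun z _ => measurableSet_ball.inter hF).symm
        _ ≤ ν ((⋃ z ∈ T, ball z s) ∩ F) := by
          refine measure_mono (Set.iUnion₂_subset fun z hz => ?_)
          exact Set.inter_subset_inter_left _
            (Set.subset_biUnion_of_mem (u := fun z => ball z s) (huT (hvu hz)))
        _ ≤ ENNReal.ofReal M := hup
    rw [Finset.sum_const, nsmul_eq_mul, ← ENNReal.ofReal_natCast,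
      ← ENNReal.ofReal_mul (by positivity)] at hsum
    exact (ENNReal.ofReal_le_ofReal_iff hM).1 hsum
  have hfin : u.Finite := by
    by_contra hinf
    obtain ⟨n, hn⟩ := exists_nat_gt (M / m)
    obtain ⟨v, hvu, rfl⟩ := Set.Infinite.exists_subset_card_eq hinf n
    have := hcard v hvu
    rw [div_lt_iff₀ hm] at hn
    linarith
  refine ⟨hfin.toFinset, hcard _ (by simp), fun z hz => ?_⟩
  obtain ⟨w, hwu, hw⟩ := hcov z hz
  exact hw.trans (Set.subset_biUnion_of_mem (u := fun w => closedBall w (4 * s))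
    (hfin.mem_toFinset.2 hwu))

section FiniteDimensional

variable {E : Type*} [NormedAddCommGroup E] [NormedSpace ℝ E] [FiniteDimensional ℝ E]
  [MeasurableSpace E] {ν : Measure E} {F : Set E}

theorem exists_measure_ball_inter_le_of_unit_ball {b : ℝ} (hb : 0 ≤ b)
    (hup : ∀ w ∈ F, ν (ball w 1 ∩ F) ≤ ENNReal.ofReal b) (R : ℝ) :
    ∃ N : ℝ, 0 ≤ N ∧ ∀ x, ν (ball x R ∩ F) ≤ ENNReal.ofReal N := by
  obtain ⟨T, hT, hTcover⟩ := totallyBounded_iff.1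
    (isCompact_closedBall (0 : E) R).totallyBounded (1 / 2) (by norm_num)
  refine ⟨hT.toFinset.card * b, by positivity, fun x => ?_⟩
  have hcover : ball x R ∩ F ⊆ ⋃ c ∈ hT.toFinset, ball (x + c) (1 / 2) ∩ F := by
    rintro y ⟨hyx, hyF⟩
    have hy : y - x ∈ closedBall (0 : E) R := by
      simpa [dist_eq_norm] using (mem_ball.1 hyx).le
    obtain ⟨c, hcT, hc⟩ := Set.mem_iUnion₂.1 (hTcover hy)
    refine Set.mem_biUnion (hT.mem_toFinset.2 hcT) ⟨?_, hyF⟩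
    rwa [mem_ball, dist_eq_norm, ← sub_sub, ← dist_eq_norm]
  have hsmall : ∀ c, ν (ball (x + c) (1 / 2) ∩ F) ≤ ENNReal.ofReal b := by
    intro c
    rcases (ball (x + c) (1 / 2) ∩ F).eq_empty_or_nonempty with h | ⟨w, hw, hwF⟩
    · rw [h, measure_empty]; exact zero_le
    have hsub : ball (x + c) (1 / 2) ∩ F ⊆ ball w 1 ∩ F := fun y ⟨hyc, hyF⟩ => by
      refine ⟨?_, hyF⟩
      have := dist_triangle_right y w (x + c)
      rw [mem_ball] at hw hyc ⊢
      linarith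
    exact (measure_mono hsub).trans (hup w hwF)
  calc ν (ball x R ∩ F)
      ≤ ∑ c ∈ hT.toFinset, ν (ball (x + c) (1 / 2) ∩ F) :=
        (measure_mono hcover).trans (measure_biUnion_finset_le _ _)
    _ ≤ ∑ _c ∈ hT.toFinset, ENNReal.ofReal b := Finset.sum_le_sum fun c _ => hsmall c
    _ = ENNReal.ofReal (hT.toFinset.card * b) := by
        rw [Finset.sum_const, nsmul_eq_mul, ENNReal.ofReal_mul (by positivity),
          ENNReal.ofReal_natCast]

theorem exists_measure_ball_mul_inter_le_rpow {ℓ b c : ℝ} (hℓ : 0 ≤ ℓ) (hb : 0 ≤ b)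
    (hc : 0 < c) (hup : ∀ x ∈ F, ∀ r : ℝ, 0 < r → r ≤ 1 →
      ν (ball x r ∩ F) ≤ ENNReal.ofReal (b * r ^ ℓ)) :
    ∃ M : ℝ, 0 ≤ M ∧ ∀ x ∈ F, ∀ r : ℝ, 0 < r → r ≤ 1 →
      ν (ball x (c * r) ∩ F) ≤ ENNReal.ofReal (M * r ^ ℓ) := by
  obtain ⟨N, hN, hNc⟩ := exists_measure_ball_inter_le_of_unit_ball hb
    (fun w hw => by simpa using hup w hw 1 one_pos le_rfl) c
  refine ⟨(N + b) * c ^ ℓ, by positivity, fun x hx r hr hr1 => ?_⟩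
  have hscale : (N + b) * c ^ ℓ * r ^ ℓ = (N + b) * (c * r) ^ ℓ := by
    rw [Real.mul_rpow hc.le hr.le]; ring
  rw [hscale]
  rcases le_or_gt (c * r) 1 with hcr | hcr
  · refine (hup x hx _ (by positivity) hcr).trans (ENNReal.ofReal_le_ofReal ?_)
    nlinarith [Real.rpow_nonneg (mul_pos hc hr).le ℓ]
  · refine (measure_mono (Set.inter_subset_inter_left _ (ball_subset_ball ?_))).trans
      ((hNc x).trans (ENNReal.ofReal_le_ofReal ?_))
    · exact mul_le_of_le_one_right hc.le hr1
    · nlinarith [Real.one_le_rpow hcr.le hℓ]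

theorem addHaar_cthickening_inter_ball_le [BorelSpace E] (μ : Measure E) [μ.IsAddHaarMeasure]
    (hF : IsClosed F) {ℓ a M s r : ℝ} {x : E} (ha : 0 < a) (hM : 0 ≤ M) (hs : 0 < s)
    (hsr : s ≤ r)
    (hlow : ∀ z ∈ F, ENNReal.ofReal (a * s ^ ℓ) ≤ ν (ball z s ∩ F))
    (hup : ν (ball x (3 * r) ∩ F) ≤ ENNReal.ofReal (M * r ^ ℓ)) :
    μ (cthickening s F ∩ ball x r) ≤ ENNReal.ofReal (M / a * 4 ^ finrank ℝ E *
      (μ (ball 0 1)).toReal * r ^ ℓ * s ^ ((finrank ℝ E : ℝ) - ℓ)) := by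
  have hr : 0 < r := hs.trans_le hsr
  have hsℓ : 0 < a * s ^ ℓ := by positivity
  obtain ⟨u, hcard, hcov⟩ := exists_finset_covering_enlargement_card_le hF.measurableSet hsℓ
    (M := M * r ^ ℓ) (by positivity) (T := F ∩ ball x (2 * r)) (fun z hz => hlow z hz.1) <| by
      refine (measure_mono (Set.inter_subset_inter_left _ ?_)).trans hup
      refine Set.iUnion₂_subset fun z hz => ball_subset_ball' ?_
      linarith [mem_ball.1 hz.2]
  have hsub : cthickening s F ∩ ball x r ⊆ ⋃ w ∈ u, closedBall w (4 * s) := by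
    rintro y ⟨hyF, hyx⟩
    rw [cthickening_eq_biUnion_closedBall F hs.le, hF.closure_eq] at hyF
    obtain ⟨z, hz, hyz⟩ := Set.mem_iUnion₂.1 hyF
    refine hcov z ⟨hz, ?_⟩ hyz
    have := dist_triangle_left z x y
    rw [mem_closedBall] at hyz
    rw [mem_ball] at hyx ⊢
    linarith
  set V := (μ (ball 0 1)).toReal
  have hV : μ (ball 0 1) = ENNReal.ofReal V := (ENNReal.ofReal_toReal measure_ball_lt_top.ne).symm
  have hcard' : (u.card : ℝ) ≤ M * r ^ ℓ / (a * s ^ ℓ) := (le_div_iff₀ hsℓ).2 hcard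
  calc μ (cthickening s F ∩ ball x r)
      ≤ ∑ w ∈ u, μ (closedBall w (4 * s)) :=
        (measure_mono hsub).trans (measure_biUnion_finset_le _ _)
    _ = ENNReal.ofReal (u.card * ((4 * s) ^ finrank ℝ E * V)) := by
        rw [Finset.sum_congr rfl fun w _ => Measure.addHaar_closedBall μ w (by positivity), hV,
          Finset.sum_const, nsmul_eq_mul, ← ENNReal.ofReal_mul (by positivity),
          ← ENNReal.ofReal_natCast, ← ENNReal.ofReal_mul (by positivity)]
    _ ≤ ENNReal.ofReal (M * r ^ ℓ / (a * s ^ ℓ) * ((4 * s) ^ finrank ℝ E * V)) := by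
        gcongr
    _ = _ := by
        rw [Real.rpow_sub hs, Real.rpow_natCast, mul_pow]
        field_simp

end FiniteDimensional

theorem regular_boundary_implies_Dt_general (d : ℕ) (ℓ : ℝ) (hℓ0 : 0 < ℓ)
    (O : Set (EuclideanSpace ℝ (Fin d)))
    (a b : ℝ) (ha : 0 < a) (hab : a ≤ b)
    (hreg : ∀ x ∈ frontier O, ∀ r : ℝ, 0 < r → r ≤ 1 →
      ENNReal.ofReal (a * r ^ ℓ) ≤ μH[ℓ] (ball x r ∩ frontier O) ∧
      μH[ℓ] (ball x r ∩ frontier O) ≤ ENNReal.ofReal (b * r ^ ℓ)) :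
    ∀ t : ℝ, 0 < t → t < min 1 ((d : ℝ) - ℓ) →
      ∃ K : ℝ, 0 ≤ K ∧
        ∀ x ∈ frontier O, ∀ r : ℝ, 0 < r → r ≤ 1 →
          ∫⁻ y in ball x r \ frontier O, EMetric.infEdist y (frontier O) ^ (-t) ≤
            ENNReal.ofReal (K * r ^ ((d : ℝ) - t)) := by
  intro t ht htmin
  have htσ : t < (d : ℝ) - ℓ := htmin.trans_le (min_le_right _ _)
  set F := frontier O
  have hF : IsClosed F := isClosed_frontier
  obtain ⟨M, hM, hupper⟩ := exists_measure_ball_mul_inter_le_rpow hℓ0.le (ha.le.trans hab)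
    three_pos fun x hx r hr hr1 => (hreg x hx r hr hr1).2
  set C := M / a * 4 ^ d * (volume (ball (0 : EuclideanSpace ℝ (Fin d)) 1)).toReal
  have hq : (2 : ℝ) ^ (t - (d - ℓ)) < 1 :=
    Real.rpow_lt_one_of_one_lt_of_neg one_lt_two (by linarith)
  refine ⟨2 ^ t * C / (1 - 2 ^ (t - (d - ℓ))), div_nonneg (by positivity) (by linarith),
    fun x hx r hr hr1 => ?_⟩
  have hthickening : ∀ s, 0 < s → s ≤ r →
      volume (cthickening s F ∩ ball x r) ≤
        ENNReal.ofReal (C * r ^ ℓ * s ^ ((d : ℝ) - ℓ)) := by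
    intro s hs hsr
    simpa only [finrank_euclideanSpace_fin] using addHaar_cthickening_inter_ball_le volume hF ha
      hM hs hsr (fun z hz => (hreg z hz s hs (hsr.trans hr1)).1) (hupper x hx r hr hr1)
  calc ∫⁻ y in ball x r \ F, infEDist y F ^ (-t)
      ≤ ENNReal.ofReal
          (2 ^ t * (C * r ^ ℓ) / (1 - 2 ^ (t - (d - ℓ))) * r ^ ((d - ℓ) - t)) :=
        setLIntegral_rpow_neg_le_of_measure_le ht htσ hr
          (fun y hy => (mem_iff_infEDist_zero_of_closed hF).not.1 hy.2)
          (fun y hy => (infEDist_le_edist_of_mem hx).trans (edist_lt_ofReal.2 hy.1).le)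
          fun s hs hsr => (measure_mono (Set.inter_subset_inter_right _ Set.sdiff_subset)).trans
            (hthickening s hs hsr)
    _ = ENNReal.ofReal (2 ^ t * C / (1 - 2 ^ (t - (d - ℓ))) * r ^ ((d : ℝ) - t)) := by
        rw [show (d : ℝ) - t = ℓ + ((d - ℓ) - t) by ring, Real.rpow_add hr]
        ring_nf

/-- An open set with `ℓ`-regular boundary (`0 < ℓ < d`) belongs to the class `D^t`
for every `t ∈ (0, min{1, d-ℓ})`. In particular, if the boundary is `(d-1)`-regular,
then `O` is of class `D^t` for every `t ∈ (0,1)`. -/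
theorem regular_boundary_implies_Dt (d : ℕ) (ℓ : ℝ) (hℓ0 : 0 < ℓ) (hℓd : ℓ < d)
    (O : Set (EuclideanSpace ℝ (Fin d))) (hO : IsOpen O)
    (a b : ℝ) (ha : 0 < a) (hab : a ≤ b)
    (hreg : ∀ x ∈ frontier O, ∀ r : ℝ, 0 < r → r ≤ 1 →
      ENNReal.ofReal (a * r ^ ℓ) ≤ μH[ℓ] (ball x r ∩ frontier O) ∧
      μH[ℓ] (ball x r ∩ frontier O) ≤ ENNReal.ofReal (b * r ^ ℓ)) :
    ∀ t : ℝ, 0 < t → t < min 1 ((d : ℝ) - ℓ) →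
      ∃ K : ℝ, 0 ≤ K ∧
        ∀ x ∈ frontier O, ∀ r : ℝ, 0 < r → r ≤ 1 →
          ∫⁻ y in ball x r \ frontier O, EMetric.infEdist y (frontier O) ^ (-t) ≤
            ENNReal.ofReal (K * r ^ ((d : ℝ) - t)) :=
  regular_boundary_implies_Dt_general d ℓ hℓ0 O a b ha hab hreg
end

section
/- Let O ⊆ ℝ^d be an open set and suppose there are constants 0 < c ≤ C < 1 such that c·|B| ≤ |B ∩ O| ≤ C·|B| for every ball B of radius at most 1 centered at a point of ∂O, where |·| denotes Lebesgue measure. Then both O and its complement ℝ^d \ O are d-regular: there exist constants 0 < a ≤ b such that a·r^d ≤ |B(x,r) ∩ O| ≤ b·r^d for every x ∈ O and 0 < r ≤ 1, and a·r^d ≤ |B(x,r) \ O| ≤ b·r^d for every x ∈ ℝ^d \ O and 0 < r ≤ 1. -/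
open MeasureTheory Metric

lemma vol_ball_eq (d : ℕ) (x : EuclideanSpace ℝ (Fin d)) {r : ℝ} (hr : 0 < r) :
    volume (ball x r) = ENNReal.ofReal (r ^ d) * volume (ball (0 : EuclideanSpace ℝ (Fin d)) 1) := by
  rw [Measure.addHaar_ball_of_pos volume x hr, finrank_euclideanSpace_fin]

lemma frontier_hit {X : Type*} [TopologicalSpace X] {s O : Set X} (hs : IsPreconnected s)
    (hO : IsOpen O) (h1 : (s ∩ O).Nonempty) (h2 : (s \ O).Nonempty) :
    (s ∩ frontier O).Nonempty := by
  by_contra h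
  rw [Set.not_nonempty_iff_eq_empty] at h
  have hfr : frontier O = closure O \ O := hO.frontier_eq
  have hmem : ∀ y ∈ s, y ∉ frontier O := by
    intro y hy hyf
    have : y ∈ s ∩ frontier O := ⟨hy, hyf⟩
    simp [h] at this
  have hsub : s ⊆ O ∪ (closure O)ᶜ := by
    intro y hy
    by_cases hyO : y ∈ O
    · exact Or.inl hyO
    · exact Or.inr fun hyc => hmem y hy (hfr ▸ ⟨hyc, hyO⟩)
  obtain ⟨w, hws, hwO⟩ := h2
  have hwc : w ∈ (closure O)ᶜ := fun hwc => hmem w hws (hfr ▸ ⟨hwc, hwO⟩)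
  obtain ⟨z, _, hzO, hzc⟩ := hs O (closure O)ᶜ hO isClosed_closure.isOpen_compl hsub h1 ⟨w, hws, hwc⟩
  exact hzc (subset_closure hzO)

/-- If an open set `O ⊆ ℝ^d` satisfies the two-sided thickness condition
`c|B| ≤ |B ∩ O| ≤ C|B|` for all balls of radius at most `1` centered on `∂O`,
then both `O` and its complement are `d`-regular. -/
theorem thickness_implies_d_regular (d : ℕ) (O : Set (EuclideanSpace ℝ (Fin d)))
    (hO : IsOpen O) (c C : ℝ) (hc : 0 < c) (hcC : c ≤ C) (hC1 : C < 1)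
    (hthick : ∀ x ∈ frontier O, ∀ r : ℝ, 0 < r → r ≤ 1 →
      ENNReal.ofReal c * volume (ball x r) ≤ volume (ball x r ∩ O) ∧
      volume (ball x r ∩ O) ≤ ENNReal.ofReal C * volume (ball x r)) :
    ∃ a b : ℝ, 0 < a ∧ a ≤ b ∧
      (∀ x ∈ O, ∀ r : ℝ, 0 < r → r ≤ 1 →
        ENNReal.ofReal (a * r ^ (d : ℝ)) ≤ volume (ball x r ∩ O) ∧
        volume (ball x r ∩ O) ≤ ENNReal.ofReal (b * r ^ (d : ℝ))) ∧
      (∀ x ∈ Oᶜ, ∀ r : ℝ, 0 < r → r ≤ 1 →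
        ENNReal.ofReal (a * r ^ (d : ℝ)) ≤ volume (ball x r \ O) ∧
        volume (ball x r \ O) ≤ ENNReal.ofReal (b * r ^ (d : ℝ))) := by
  have hOm : MeasurableSet O := hO.measurableSet
  have hC0 : (0:ℝ) ≤ C := hc.le.trans hcC
  set V : ENNReal := volume (ball (0 : EuclideanSpace ℝ (Fin d)) 1) with hVdef
  have hVlt : V < ⊤ := measure_ball_lt_top
  have hVpos : 0 < V := measure_ball_pos _ _ one_pos
  set v : ℝ := V.toReal with hvdef
  have hv : 0 < v := ENNReal.toReal_pos hVpos.ne' hVlt.ne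
  have hVv : V = ENNReal.ofReal v := (ENNReal.ofReal_toReal hVlt.ne).symm
  have key : ∀ (x : EuclideanSpace ℝ (Fin d)) (r : ℝ), 0 < r →
      volume (ball x r) = ENNReal.ofReal (v * r ^ d) := by
    intro x r hr
    rw [vol_ball_eq d x hr, ← hVdef, hVv, ← ENNReal.ofReal_mul (by positivity), mul_comm]
  set m : ℝ := min c (1 - C) with hmdef
  have hm0 : 0 < m := lt_min hc (by linarith)
  have hmc : m ≤ c := min_le_left _ _
  have hmC : m ≤ 1 - C := min_le_right _ _
  have hm1 : m ≤ 1 := hmC.trans (by linarith)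
  have h2d : (0:ℝ) < 2 ^ d := by positivity
  have h2d1 : (1:ℝ) ≤ 2 ^ d := one_le_pow₀ (by norm_num)
  have hfact : ∀ r : ℝ, 0 < r → m * v / 2 ^ d * r ^ (d:ℝ) = m * (v * (r/2) ^ d) := by
    intro r hr
    rw [Real.rpow_natCast, div_pow]
    field_simp
  refine ⟨m * v / 2 ^ d, v, by positivity, ?_, ?_, ?_⟩
  · rw [div_le_iff₀ h2d]
    nlinarith
  · -- points of O
    intro x hx r hr hr1
    have hr2 : 0 < r / 2 := by linarith
    constructor
    · by_cases hsub : ball x (r/2) ⊆ O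
      · calc ENNReal.ofReal (m * v / 2 ^ d * r ^ (d:ℝ))
            ≤ ENNReal.ofReal (v * (r/2) ^ d) := by
              apply ENNReal.ofReal_le_ofReal
              rw [hfact r hr]
              exact mul_le_of_le_one_left (by positivity) hm1
          _ = volume (ball x (r/2)) := (key x _ hr2).symm
          _ ≤ volume (ball x r ∩ O) := measure_mono fun y hy =>
              ⟨ball_subset_ball (by linarith) hy, hsub hy⟩
      · obtain ⟨w, hw1, hw2⟩ := Set.not_subset.1 hsub
        obtain ⟨z, hzb, hzf⟩ := frontier_hit (convex_ball x (r/2)).isPreconnected hO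
          ⟨x, mem_ball_self hr2, hx⟩ ⟨w, hw1, hw2⟩
        have hball : ball z (r/2) ⊆ ball x r := by
          intro y hy
          rw [mem_ball] at *
          calc dist y x ≤ dist y z + dist z x := dist_triangle y z x
            _ < r/2 + r/2 := add_lt_add hy hzb
            _ = r := by ring
        have hth := (hthick z hzf (r/2) hr2 (by linarith)).1
        calc ENNReal.ofReal (m * v / 2 ^ d * r ^ (d:ℝ))
            ≤ ENNReal.ofReal (c * (v * (r/2) ^ d)) := by
              apply ENNReal.ofReal_le_ofReal
              rw [hfact r hr]
              exact mul_le_mul_of_nonneg_right hmc (by positivity)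
          _ = ENNReal.ofReal c * ENNReal.ofReal (v * (r/2) ^ d) := ENNReal.ofReal_mul hc.le
          _ = ENNReal.ofReal c * volume (ball z (r/2)) := by rw [key z _ hr2]
          _ ≤ volume (ball z (r/2) ∩ O) := hth
          _ ≤ volume (ball x r ∩ O) := measure_mono (Set.inter_subset_inter_left _ hball)
    · calc volume (ball x r ∩ O) ≤ volume (ball x r) := measure_mono Set.inter_subset_left
        _ = ENNReal.ofReal (v * r ^ d) := key x r hr
        _ = ENNReal.ofReal (v * r ^ (d:ℝ)) := by rw [Real.rpow_natCast]
  · -- points of the complement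
    intro x hx r hr hr1
    have hr2 : 0 < r / 2 := by linarith
    constructor
    · by_cases hne : (ball x (r/2) ∩ O).Nonempty
      · obtain ⟨z, hzb, hzf⟩ := frontier_hit (convex_ball x (r/2)).isPreconnected hO hne
          ⟨x, mem_ball_self hr2, hx⟩
        have hball : ball z (r/2) ⊆ ball x r := by
          intro y hy
          rw [mem_ball] at *
          calc dist y x ≤ dist y z + dist z x := dist_triangle y z x
            _ < r/2 + r/2 := add_lt_add hy hzb
            _ = r := by ring
        have hth := (hthick z hzf (r/2) hr2 (by linarith)).2
        set B := ball z (r/2) with hBdef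
        have hBfin : volume (B ∩ O) ≠ ⊤ :=
          (lt_of_le_of_lt (measure_mono Set.inter_subset_left) measure_ball_lt_top).ne
        have hdiff : volume (B \ O) = volume B - volume (B ∩ O) := by
          have hBeq : B \ O = B \ (B ∩ O) := by
            ext y
            simp only [Set.mem_diff, Set.mem_inter_iff]
            tauto
          rw [hBeq]
          exact measure_diff Set.inter_subset_left
            (measurableSet_ball.inter hOm).nullMeasurableSet hBfin
        calc ENNReal.ofReal (m * v / 2 ^ d * r ^ (d:ℝ))
            ≤ ENNReal.ofReal ((1 - C) * (v * (r/2) ^ d)) := by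
              apply ENNReal.ofReal_le_ofReal
              rw [hfact r hr]
              exact mul_le_mul_of_nonneg_right hmC (by positivity)
          _ = ENNReal.ofReal (v * (r/2) ^ d) - ENNReal.ofReal (C * (v * (r/2) ^ d)) := by
              rw [show (1 - C) * (v * (r/2) ^ d)
                    = v * (r/2) ^ d - C * (v * (r/2) ^ d) by ring,
                ENNReal.ofReal_sub _ (mul_nonneg hC0 (by positivity))]
          _ = volume B - ENNReal.ofReal C * volume B := by
              rw [key z _ hr2, ENNReal.ofReal_mul hC0]
          _ ≤ volume B - volume (B ∩ O) := tsub_le_tsub_left hth _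
          _ = volume (B \ O) := hdiff.symm
          _ ≤ volume (ball x r \ O) := measure_mono (Set.diff_subset_diff_left hball)
      · rw [Set.not_nonempty_iff_eq_empty, Set.eq_empty_iff_forall_notMem] at hne
        have hsub2 : ball x (r/2) ⊆ ball x r \ O := fun y hy =>
          ⟨ball_subset_ball (by linarith) hy, fun hyO => hne y ⟨hy, hyO⟩⟩
        calc ENNReal.ofReal (m * v / 2 ^ d * r ^ (d:ℝ))
            ≤ ENNReal.ofReal (v * (r/2) ^ d) := by
              apply ENNReal.ofReal_le_ofReal
              rw [hfact r hr]
              exact mul_le_of_le_one_left (by positivity) hm1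
          _ = volume (ball x (r/2)) := (key x _ hr2).symm
          _ ≤ volume (ball x r \ O) := measure_mono hsub2
    · calc volume (ball x r \ O) ≤ volume (ball x r) := measure_mono Set.diff_subset
        _ = ENNReal.ofReal (v * r ^ d) := key x r hr
        _ = ENNReal.ofReal (v * r ^ (d:ℝ)) := by rw [Real.rpow_natCast]
end

section
/- Let d ≥ 2, let O ⊆ ℝ^d be open, and let D ⊆ ∂O be (d−1)-regular. Suppose O satisfies the uniform Lipschitz condition around the closed set cl(∂O \ D). Then the full boundary ∂O is (d−1)-regular. -/
open MeasureTheory Metric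

/-- The open unit cube `(-1,1)^d`. -/
def unitCube (d : ℕ) : Set (EuclideanSpace ℝ (Fin d)) :=
  {y | ∀ i, |y i| < 1}

/-- The lower half `(-1,0) × (-1,1)^(d-1)` of the unit cube. -/
def lowerHalfCube (d : ℕ) [NeZero d] : Set (EuclideanSpace ℝ (Fin d)) :=
  {y | -1 < y 0 ∧ y 0 < 0 ∧ ∀ i, i ≠ 0 → |y i| < 1}

/-- The central face `{0} × (-1,1)^(d-1)` of the unit cube. -/
def cubeFace (d : ℕ) [NeZero d] : Set (EuclideanSpace ℝ (Fin d)) :=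
  {y | y 0 = 0 ∧ ∀ i, i ≠ 0 → |y i| < 1}

/-!
Cover `∂O` by `D` and `F = cl(∂O \ D)`. Near a point `x ∈ F` a chart carries `∂O` bi-Lipschitzly
onto the flat face `{0} × (-1,1)^(d-1)`, on which `H^(d-1)` is comparable to Lebesgue measure on
`ℝ^(d-1)`; since the chart domain contains `B(x, 1/(2L))`, this gives
`c t^(d-1) ≤ H^(d-1)(B(x,t) ∩ ∂O) ≤ C t^(d-1)` for `t ≤ 1/(2L)`. The lower bound extends to all
`r ≤ 1` by monotonicity in `r`. Upper bounds at small scales around points of a set extend to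
balls of radius `≤ 1` with arbitrary centres, because a unit ball is covered by boundedly many
small balls; the upper bound for `∂O` is the sum of those for `D` and `F`.
-/

open Set Function Metric MeasureTheory
open scoped ENNReal NNReal

lemma Set.SurjOn.lipschitzOnWith_invFunOn {α β : Type*} [PseudoMetricSpace α] [Nonempty α]
    [PseudoMetricSpace β] {f : α → β} {s : Set α} {t : Set β} {K : ℝ≥0} (hf : SurjOn f s t)
    (h : ∀ x ∈ s, ∀ y ∈ s, dist x y ≤ K * dist (f x) (f y)) :
    LipschitzOnWith K (invFunOn f s) t :=
  LipschitzOnWith.of_dist_le_mul fun u hu v hv => by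
    simpa only [hf.rightInvOn_invFunOn hu, hf.rightInvOn_invFunOn hv] using
      h _ (hf.mapsTo_invFunOn hu) _ (hf.mapsTo_invFunOn hv)

lemma hausdorffMeasure_le_mul_hausdorffMeasure_image {X Y : Type*} [MetricSpace X]
    [MeasurableSpace X] [BorelSpace X] [MetricSpace Y] [MeasurableSpace Y] [BorelSpace Y]
    {f : X → Y} {A : Set X} {K : ℝ≥0} (h : ∀ x ∈ A, ∀ y ∈ A, dist x y ≤ K * dist (f x) (f y))
    {d : ℝ} (hd : 0 ≤ d) : μH[d] A ≤ (K : ℝ≥0∞) ^ d * μH[d] (f '' A) := by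
  rcases A.eq_empty_or_nonempty with rfl | ⟨x, -⟩
  · simp
  have : Nonempty X := ⟨x⟩
  have hinj : InjOn f A := fun x hx y hy hxy =>
    dist_le_zero.1 (by simpa [hxy] using h x hx y hy)
  conv_lhs => rw [← hinj.leftInvOn_invFunOn.image_image]
  exact ((surjOn_image f A).lipschitzOnWith_invFunOn h).hausdorffMeasure_image_le hd

lemma IsPreconnected.subset_of_inter_subset_isClosed {α : Type*} [TopologicalSpace α]
    {s U K : Set α} (hs : IsPreconnected s) (hU : IsOpen U) (hK : IsClosed K) (hKU : K ⊆ U)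
    (hne : (s ∩ U).Nonempty) (h : s ∩ U ⊆ K) : s ⊆ K := by
  intro z hz
  by_contra hzK
  obtain ⟨w, hws, hwU, hwK⟩ := hs U Kᶜ hU hK.isOpen_compl
    (fun y _ => (em (y ∈ K)).imp (hKU ·) id) hne ⟨z, hz, hzK⟩
  exact hwK (h ⟨hws, hwU⟩)

lemma ENNReal.coe_rpow_natCast_eq_ofReal (L : ℝ≥0) (n : ℕ) :
    (L : ℝ≥0∞) ^ (n : ℝ) = ENNReal.ofReal (L ^ n) := by
  rw [ENNReal.rpow_natCast, ← ENNReal.coe_pow, ← ENNReal.ofReal_coe_nnreal, NNReal.coe_pow]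

section Regularity

variable {X : Type*} [MeasurableSpace X] {μ : Measure X} {s : ℝ}

def IsAhlforsRegular [PseudoMetricSpace X] (μ : Measure X) (s : ℝ) (E : Set X) : Prop :=
  ∃ a b : ℝ, 0 < a ∧ a ≤ b ∧ ∀ x ∈ E, ∀ r : ℝ, 0 < r → r ≤ 1 →
    ENNReal.ofReal (a * r ^ s) ≤ μ (ball x r ∩ E) ∧ μ (ball x r ∩ E) ≤ ENNReal.ofReal (b * r ^ s)

lemma measure_ball_inter_le_of_two_mul_le [PseudoMetricSpace X] {S : Set X} {c ρ : ℝ}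
    (h : ∀ y ∈ S, ∀ t, 0 < t → t ≤ ρ → μ (ball y t ∩ S) ≤ ENNReal.ofReal (c * t ^ s))
    (z : X) {t : ℝ} (ht : 2 * t ≤ ρ) :
    μ (ball z t ∩ S) ≤ ENNReal.ofReal (c * (2 * t) ^ s) := by
  rcases (ball z t ∩ S).eq_empty_or_nonempty with he | ⟨w, hwz, hwS⟩
  · simp [he]
  have ht0 : 0 < t := pos_of_mem_ball hwz
  refine (measure_mono (inter_subset_inter_left S (ball_subset_ball' ?_))).trans
    (h w hwS _ (by positivity) ht)
  rw [dist_comm]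
  linarith [mem_ball.1 hwz]

lemma exists_measure_ball_inter_le_of_local [SeminormedAddCommGroup X] [ProperSpace X] {S : Set X}
    {c ρ : ℝ} (hs : 0 ≤ s) (hc : 0 ≤ c) (hρ : 0 < ρ)
    (h : ∀ y ∈ S, ∀ t, 0 < t → t ≤ ρ → μ (ball y t ∩ S) ≤ ENNReal.ofReal (c * t ^ s)) :
    ∃ C, 0 ≤ C ∧ ∀ x, ∀ r, 0 < r → r ≤ 1 → μ (ball x r ∩ S) ≤ ENNReal.ofReal (C * r ^ s) := by
  obtain ⟨Q, -, hQ, hcover⟩ := (isCompact_closedBall (0 : X) 1).finite_cover_balls (half_pos hρ)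
  set N := hQ.toFinset.card
  refine ⟨(N + 1) * (c * 2 ^ s), by positivity, fun x r hr hr1 => ?_⟩
  have hpow : (2 * r) ^ s = 2 ^ s * r ^ s := Real.mul_rpow zero_le_two hr.le
  rcases le_or_gt (2 * r) ρ with hsmall | hlarge
  · refine (measure_ball_inter_le_of_two_mul_le h x hsmall).trans (ENNReal.ofReal_le_ofReal ?_)
    rw [hpow, ← mul_assoc, mul_assoc _ (c * 2 ^ s)]
    exact le_mul_of_one_le_left (by positivity) (le_add_of_nonneg_left N.cast_nonneg)
  have hsub : ball x r ∩ S ⊆ ⋃ q ∈ hQ.toFinset, ball (x + q) (ρ / 2) ∩ S := by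
    rintro z ⟨hz, hzS⟩
    have hzx : z - x ∈ closedBall 0 1 := by
      rw [mem_closedBall, dist_zero_right, ← dist_eq_norm]
      exact (mem_ball.1 hz).le.trans hr1
    obtain ⟨q, hq, hzq⟩ := mem_iUnion₂.1 (hcover hzx)
    refine mem_iUnion₂.2 ⟨q, hQ.mem_toFinset.2 hq, ?_, hzS⟩
    rwa [mem_ball, dist_eq_norm, ← sub_sub, ← dist_eq_norm]
  have hpiece : ∀ q, μ (ball (x + q) (ρ / 2) ∩ S) ≤ ENNReal.ofReal (c * (2 * r) ^ s) :=
    fun q => (measure_ball_inter_le_of_two_mul_le h _ (by linarith)).trans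
      (ENNReal.ofReal_le_ofReal (by gcongr; linarith))
  calc μ (ball x r ∩ S) ≤ ∑ q ∈ hQ.toFinset, μ (ball (x + q) (ρ / 2) ∩ S) :=
        (measure_mono hsub).trans (measure_biUnion_finset_le _ _)
    _ ≤ N * ENNReal.ofReal (c * (2 * r) ^ s) :=
        (Finset.sum_le_card_nsmul _ _ _ fun q _ => hpiece q).trans_eq (nsmul_eq_mul _ _)
    _ ≤ ENNReal.ofReal ((N + 1) * (c * 2 ^ s) * r ^ s) := by
        rw [← ENNReal.ofReal_natCast, ← ENNReal.ofReal_mul N.cast_nonneg, hpow]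
        apply ENNReal.ofReal_le_ofReal
        nlinarith [show 0 ≤ c * 2 ^ s * r ^ s by positivity]

lemma le_measure_ball_inter_of_local [PseudoMetricSpace X] {S B : Set X} {c δ : ℝ}
    (hs : 0 ≤ s) (hc : 0 ≤ c) (hδ : 0 < δ) (hδ1 : δ ≤ 1)
    (h : ∀ x ∈ S, ∀ t, 0 < t → t ≤ δ → ENNReal.ofReal (c * t ^ s) ≤ μ (ball x t ∩ B))
    {x : X} (hx : x ∈ S) {r : ℝ} (hr : 0 < r) (hr1 : r ≤ 1) :
    ENNReal.ofReal (c * δ ^ s * r ^ s) ≤ μ (ball x r ∩ B) := by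
  rcases le_or_gt r δ with hrδ | hδr
  · refine le_trans (ENNReal.ofReal_le_ofReal ?_) (h x hx r hr hrδ)
    gcongr
    exact mul_le_of_le_one_right hc (Real.rpow_le_one hδ.le hδ1 hs)
  calc ENNReal.ofReal (c * δ ^ s * r ^ s) ≤ ENNReal.ofReal (c * δ ^ s) :=
        ENNReal.ofReal_le_ofReal
          (mul_le_of_le_one_right (by positivity) (Real.rpow_le_one hr.le hr1 hs))
    _ ≤ μ (ball x δ ∩ B) := h x hx δ hδ le_rfl
    _ ≤ μ (ball x r ∩ B) := measure_mono (inter_subset_inter_left _ (ball_subset_ball hδr.le))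

theorem isAhlforsRegular_of_subset_union [SeminormedAddCommGroup X] [ProperSpace X]
    (hs : 0 ≤ s) {B D F : Set X} (hDB : D ⊆ B) (hFB : F ⊆ B) (hBDF : B ⊆ D ∪ F)
    (hD : IsAhlforsRegular μ s D) {c C δ : ℝ} (hc : 0 < c) (hC : 0 ≤ C) (hδ : 0 < δ)
    (hδ1 : δ ≤ 1)
    (hF : ∀ x ∈ F, ∀ t, 0 < t → t ≤ δ → ENNReal.ofReal (c * t ^ s) ≤ μ (ball x t ∩ B) ∧
      μ (ball x t ∩ B) ≤ ENNReal.ofReal (C * t ^ s)) :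
    IsAhlforsRegular μ s B := by
  obtain ⟨a, b, ha, hab, hD⟩ := hD
  obtain ⟨CD, hCD, hDup⟩ := exists_measure_ball_inter_le_of_local hs (ha.le.trans hab) zero_lt_one
    fun x hx r hr hr1 => (hD x hx r hr hr1).2
  obtain ⟨CF, hCF, hFup⟩ := exists_measure_ball_inter_le_of_local hs hC hδ fun x hx t ht htδ =>
    (measure_mono (inter_subset_inter_right _ hFB)).trans (hF x hx t ht htδ).2
  set a' := min a (c * δ ^ s)
  have ha' : 0 < a' := by positivity
  refine ⟨a', a' + (CD + CF), ha', le_add_of_nonneg_right (by positivity),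
    fun x hx r hr hr1 => ⟨?_, ?_⟩⟩
  · rcases hBDF hx with hxD | hxF
    · calc ENNReal.ofReal (a' * r ^ s) ≤ ENNReal.ofReal (a * r ^ s) := by
            gcongr
            exact min_le_left _ _
        _ ≤ μ (ball x r ∩ D) := (hD x hxD r hr hr1).1
        _ ≤ μ (ball x r ∩ B) := measure_mono (inter_subset_inter_right _ hDB)
    · calc ENNReal.ofReal (a' * r ^ s) ≤ ENNReal.ofReal (c * δ ^ s * r ^ s) := by
            gcongr
            exact min_le_right _ _
        _ ≤ μ (ball x r ∩ B) := le_measure_ball_inter_of_local hs hc.le hδ hδ1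
            (fun y hy t ht htδ => (hF y hy t ht htδ).1) hxF hr hr1
  · calc μ (ball x r ∩ B) ≤ μ (ball x r ∩ D) + μ (ball x r ∩ F) := by
          refine (measure_mono ?_).trans (measure_union_le _ _)
          rw [← inter_union_distrib_left]
          exact inter_subset_inter_right _ hBDF
      _ ≤ ENNReal.ofReal (CD * r ^ s) + ENNReal.ofReal (CF * r ^ s) :=
          add_le_add (hDup x r hr hr1) (hFup x r hr hr1)
      _ = ENNReal.ofReal ((CD + CF) * r ^ s) := by
          rw [add_mul, ENNReal.ofReal_add (by positivity) (by positivity)]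
      _ ≤ ENNReal.ofReal ((a' + (CD + CF)) * r ^ s) := ENNReal.ofReal_le_ofReal
          (mul_le_mul_of_nonneg_right (le_add_of_nonneg_left ha'.le) (by positivity))

end Regularity

def hyperplaneEmbedding (n : ℕ) (z : Fin n → ℝ) : EuclideanSpace ℝ (Fin (n + 1)) :=
  WithLp.toLp 2 (Fin.cons 0 z)

lemma isometry_finCons_zero (n : ℕ) :
    Isometry fun z : Fin n → ℝ => (Fin.cons 0 z : Fin (n + 1) → ℝ) := by
  refine Isometry.of_dist_eq fun z w => le_antisymm ?_ ?_
  · refine (dist_pi_le_iff dist_nonneg).2 fun i => ?_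
    refine Fin.cases ?_ (fun j => ?_) i
    · simp
    · simpa using dist_le_pi_dist z w j
  · refine (dist_pi_le_iff dist_nonneg).2 fun j => ?_
    simpa using dist_le_pi_dist (Fin.cons 0 z : Fin (n + 1) → ℝ) (Fin.cons 0 w) j.succ

lemma lipschitzWith_hyperplaneEmbedding (n : ℕ) :
    LipschitzWith (NNReal.sqrt (n + 1)) (hyperplaneEmbedding n) := by
  convert (PiLp.lipschitzWith_toLp 2 _).comp (isometry_finCons_zero n).lipschitz using 1
  · simp [NNReal.sqrt_eq_rpow]
  · rfl

lemma antilipschitzWith_hyperplaneEmbedding (n : ℕ) :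
    AntilipschitzWith 1 (hyperplaneEmbedding n) := by
  have h := (PiLp.antilipschitzWith_toLp 2 _).comp (isometry_finCons_zero n).antilipschitz
  rw [mul_one] at h
  exact h

lemma hyperplaneEmbedding_zero (n : ℕ) : hyperplaneEmbedding n 0 = 0 := by
  ext i
  refine Fin.cases ?_ (fun j => ?_) i <;> simp [hyperplaneEmbedding]

lemma image_hyperplaneEmbedding_ball_subset (n : ℕ) {s : ℝ} (hs : s ≤ 1) :
    hyperplaneEmbedding n '' ball 0 (s / √(n + 1)) ⊆ cubeFace (n + 1) ∩ ball 0 s := by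
  have hK : 1 ≤ √((n : ℝ) + 1) := Real.one_le_sqrt.2 (by linarith [n.cast_nonneg (α := ℝ)])
  rintro _ ⟨z, hz, rfl⟩
  rw [mem_ball_zero_iff] at hz
  refine ⟨⟨by simp [hyperplaneEmbedding], fun i hi => ?_⟩, ?_⟩
  · obtain ⟨j, rfl⟩ := Fin.exists_succ_eq.2 hi
    calc |hyperplaneEmbedding n z j.succ| = |z j| := by simp [hyperplaneEmbedding]
      _ ≤ ‖z‖ := norm_le_pi_norm z j
      _ < s / √(n + 1) := hz
      _ ≤ 1 := div_le_one_of_le₀ (hs.trans hK) (Real.sqrt_nonneg _)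
  · rw [mem_ball, ← hyperplaneEmbedding_zero n]
    calc dist (hyperplaneEmbedding n z) (hyperplaneEmbedding n 0)
        ≤ √(n + 1) * dist z 0 := by
          simpa using (lipschitzWith_hyperplaneEmbedding n).dist_le_mul z 0
      _ < √(n + 1) * (s / √(n + 1)) := by
          gcongr
          simpa using hz
      _ = s := by field_simp

lemma cubeFace_inter_ball_subset_image (n : ℕ) (s : ℝ) :
    cubeFace (n + 1) ∩ ball 0 s ⊆ hyperplaneEmbedding n '' ball 0 s := by
  rintro y ⟨⟨hy0, -⟩, hys⟩
  refine ⟨Fin.tail y.ofLp, ?_, ?_⟩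
  · rw [mem_ball_zero_iff] at hys ⊢
    refine lt_of_le_of_lt ((pi_norm_le_iff_of_nonneg (norm_nonneg y)).2 fun j => ?_) hys
    simpa [Fin.tail] using PiLp.norm_apply_le y j.succ
  · ext i
    refine Fin.cases ?_ (fun j => ?_) i <;> simp [hyperplaneEmbedding, Fin.tail, hy0]

lemma hausdorffMeasure_fin_pi_real (n : ℕ) : (μH[n] : Measure (Fin n → ℝ)) = volume := by
  simpa using hausdorffMeasure_pi_real (ι := Fin n)

lemma le_hausdorffMeasure_cubeFace_inter_ball (n : ℕ) {s : ℝ} (hs : 0 < s) (hs1 : s ≤ 1) :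
    ENNReal.ofReal ((2 * s / √(n + 1)) ^ n) ≤ μH[n] (cubeFace (n + 1) ∩ ball 0 s) :=
  calc ENNReal.ofReal ((2 * s / √(n + 1)) ^ n)
        = μH[n] (ball (0 : Fin n → ℝ) (s / √(n + 1))) := by
        rw [hausdorffMeasure_fin_pi_real, Real.volume_pi_ball _ (by positivity), Fintype.card_fin,
          mul_div_assoc]
    _ ≤ μH[n] (hyperplaneEmbedding n '' ball 0 (s / √(n + 1))) := by
        simpa using (antilipschitzWith_hyperplaneEmbedding n).le_hausdorffMeasure_image
          n.cast_nonneg (ball 0 (s / √(n + 1)))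
    _ ≤ μH[n] (cubeFace (n + 1) ∩ ball 0 s) :=
        measure_mono (image_hyperplaneEmbedding_ball_subset n hs1)

lemma hausdorffMeasure_cubeFace_inter_ball_le (n : ℕ) {s : ℝ} (hs : 0 < s) :
    μH[n] (cubeFace (n + 1) ∩ ball 0 s) ≤ ENNReal.ofReal ((2 * √(n + 1) * s) ^ n) :=
  calc μH[n] (cubeFace (n + 1) ∩ ball 0 s) ≤ μH[n] (hyperplaneEmbedding n '' ball 0 s) :=
        measure_mono (cubeFace_inter_ball_subset_image n s)
    _ ≤ (NNReal.sqrt (n + 1) : ℝ≥0∞) ^ (n : ℝ) * μH[n] (ball (0 : Fin n → ℝ) s) :=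
        (lipschitzWith_hyperplaneEmbedding n).hausdorffMeasure_image_le n.cast_nonneg _
    _ = ENNReal.ofReal ((2 * √(n + 1) * s) ^ n) := by
        rw [hausdorffMeasure_fin_pi_real, Real.volume_pi_ball _ hs, Fintype.card_fin,
          ENNReal.rpow_natCast, ← ENNReal.ofReal_coe_nnreal, Real.coe_sqrt,
          ← ENNReal.ofReal_pow (by positivity), ← ENNReal.ofReal_mul (by positivity)]
        push_cast
        ring_nf

lemma ball_zero_one_subset_unitCube (d : ℕ) :
    ball (0 : EuclideanSpace ℝ (Fin d)) 1 ⊆ unitCube d := fun y hy i =>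
  (PiLp.norm_apply_le y i).trans_lt (mem_ball_zero_iff.1 hy)

section Chart

variable {n : ℕ}

structure IsFlatChart (B U : Set (EuclideanSpace ℝ (Fin (n + 1))))
    (Φ : EuclideanSpace ℝ (Fin (n + 1)) → EuclideanSpace ℝ (Fin (n + 1)))
    (x : EuclideanSpace ℝ (Fin (n + 1))) (L : ℝ≥0) : Prop where
  isOpen : IsOpen U
  mem : x ∈ U
  map_center : Φ x = 0
  bijOn : BijOn Φ U (unitCube (n + 1))
  lipschitzOnWith : LipschitzOnWith L Φ U
  dist_le_mul : ∀ y ∈ U, ∀ z ∈ U, dist y z ≤ L * dist (Φ y) (Φ z)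
  image_inter : Φ '' (U ∩ B) = cubeFace (n + 1)

namespace IsFlatChart

variable {B U : Set (EuclideanSpace ℝ (Fin (n + 1)))}
  {Φ : EuclideanSpace ℝ (Fin (n + 1)) → EuclideanSpace ℝ (Fin (n + 1))}
  {x : EuclideanSpace ℝ (Fin (n + 1))} {L : ℝ≥0}

lemma mono (h : IsFlatChart B U Φ x L) {L' : ℝ≥0} (hL : L ≤ L') : IsFlatChart B U Φ x L' where
  __ := h
  lipschitzOnWith := h.lipschitzOnWith.weaken hL
  dist_le_mul y hy z hz := (h.dist_le_mul y hy z hz).trans (by gcongr)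

lemma ball_subset (h : IsFlatChart B U Φ x L) (hL : 0 < L) : ball x (1 / (2 * L)) ⊆ U := by
  have hsub : closedBall (0 : EuclideanSpace ℝ (Fin (n + 1))) (1 / 2) ⊆ unitCube (n + 1) :=
    (closedBall_subset_ball one_half_lt_one).trans (ball_zero_one_subset_unitCube _)
  -- `U ∩ ball x (1 / (2 * L))` lies in the compact set `K ⊆ U`, so it is clopen in the ball.
  set K := invFunOn Φ U '' closedBall 0 (1 / 2)
  have hK : IsCompact K := (isCompact_closedBall _ _).image_of_continuousOn
    ((h.bijOn.surjOn.lipschitzOnWith_invFunOn h.dist_le_mul).mono hsub).continuousOn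
  have hKU : K ⊆ U := (h.bijOn.surjOn.mapsTo_invFunOn.mono_left hsub).image_subset
  refine Subset.trans ?_ hKU
  refine (convex_ball x _).isPreconnected.subset_of_inter_subset_isClosed h.isOpen hK.isClosed hKU
    ⟨x, mem_ball_self (by positivity), h.mem⟩ ?_
  rintro z ⟨hzx, hzU⟩
  refine ⟨Φ z, ?_, h.bijOn.invOn_invFunOn.1 hzU⟩
  rw [mem_closedBall, ← h.map_center]
  calc dist (Φ z) (Φ x) ≤ L * dist z x := h.lipschitzOnWith.dist_le_mul z hzU x h.mem
    _ ≤ L * (1 / (2 * L)) := by gcongr; exact (mem_ball.1 hzx).le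
    _ = 1 / 2 := by field_simp

lemma hausdorffMeasure_ball_inter_le (h : IsFlatChart B U Φ x L) (hL : 0 < L) {t : ℝ}
    (ht : 0 < t) (htL : t ≤ 1 / (2 * L)) :
    μH[n] (ball x t ∩ B) ≤ ENNReal.ofReal ((2 * √(n + 1) * L ^ 2) ^ n * t ^ n) := by
  have hA : ball x t ∩ B ⊆ U ∩ B :=
    inter_subset_inter_left _ ((ball_subset_ball htL).trans (h.ball_subset hL))
  have himg : Φ '' (ball x t ∩ B) ⊆ cubeFace (n + 1) ∩ ball 0 (L * t) := by
    rintro _ ⟨z, hz, rfl⟩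
    refine ⟨h.image_inter ▸ mem_image_of_mem Φ (hA hz), ?_⟩
    rw [mem_ball, ← h.map_center]
    calc dist (Φ z) (Φ x) ≤ L * dist z x := h.lipschitzOnWith.dist_le_mul z (hA hz).1 x h.mem
      _ < L * t := by gcongr; exact hz.1
  calc μH[n] (ball x t ∩ B) ≤ (L : ℝ≥0∞) ^ (n : ℝ) * μH[n] (Φ '' (ball x t ∩ B)) :=
        hausdorffMeasure_le_mul_hausdorffMeasure_image
          (fun y hy z hz => h.dist_le_mul y (hA hy).1 z (hA hz).1) n.cast_nonneg
    _ ≤ ENNReal.ofReal (L ^ n) * ENNReal.ofReal ((2 * √(n + 1) * (L * t)) ^ n) := by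
        rw [ENNReal.coe_rpow_natCast_eq_ofReal]
        gcongr
        exact (measure_mono himg).trans (hausdorffMeasure_cubeFace_inter_ball_le n (by positivity))
    _ = ENNReal.ofReal ((2 * √(n + 1) * L ^ 2) ^ n * t ^ n) := by
        rw [← ENNReal.ofReal_mul (by positivity)]
        ring_nf

lemma le_hausdorffMeasure_ball_inter (h : IsFlatChart B U Φ x L) {t : ℝ} (ht : 0 < t)
    (htL : t ≤ L) :
    ENNReal.ofReal ((2 / (√(n + 1) * L ^ 2)) ^ n * t ^ n) ≤ μH[n] (ball x t ∩ B) := by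
  have hL : 0 < (L : ℝ) := ht.trans_le htL
  have hsub : cubeFace (n + 1) ∩ ball 0 (t / L) ⊆ Φ '' (U ∩ (ball x t ∩ B)) := by
    rintro u ⟨hu, hut⟩
    rw [← h.image_inter] at hu
    obtain ⟨z, ⟨hzU, hzB⟩, rfl⟩ := hu
    refine ⟨z, ⟨hzU, ?_, hzB⟩, rfl⟩
    rw [mem_ball, ← h.map_center] at hut
    rw [mem_ball]
    calc dist z x ≤ L * dist (Φ z) (Φ x) := h.dist_le_mul z hzU x h.mem
      _ < L * (t / L) := by gcongr
      _ = t := by field_simp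
  have hΦ : μH[n] (Φ '' (U ∩ (ball x t ∩ B))) ≤
      ENNReal.ofReal (L ^ n) * μH[n] (ball x t ∩ B) := by
    rw [← ENNReal.coe_rpow_natCast_eq_ofReal]
    exact ((h.lipschitzOnWith.mono inter_subset_left).hausdorffMeasure_image_le
      n.cast_nonneg).trans (mul_le_mul_right (measure_mono inter_subset_right) _)
  refine (ENNReal.mul_le_mul_iff_right (a := ENNReal.ofReal (L ^ n)) (by positivity)
    ENNReal.ofReal_ne_top).1 ?_
  calc ENNReal.ofReal (L ^ n) * ENNReal.ofReal ((2 / (√(n + 1) * L ^ 2)) ^ n * t ^ n)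
      = ENNReal.ofReal ((2 * (t / L) / √(n + 1)) ^ n) := by
        rw [← ENNReal.ofReal_mul (by positivity), ← mul_pow, ← mul_pow]
        congr 2
        field_simp
    _ ≤ μH[n] (cubeFace (n + 1) ∩ ball 0 (t / L)) :=
        le_hausdorffMeasure_cubeFace_inter_ball n (by positivity) ((div_le_one hL).2 htL)
    _ ≤ ENNReal.ofReal (L ^ n) * μH[n] (ball x t ∩ B) := (measure_mono hsub).trans hΦ

end IsFlatChart

end Chart

theorem full_boundary_regular_general (d : ℕ) [NeZero d]
    (O : Set (EuclideanSpace ℝ (Fin d)))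
    (D : Set (EuclideanSpace ℝ (Fin d))) (hDO : D ⊆ frontier O)
    (a b : ℝ) (ha : 0 < a) (hab : a ≤ b)
    (hDreg : ∀ x ∈ D, ∀ r : ℝ, 0 < r → r ≤ 1 →
      ENNReal.ofReal (a * r ^ ((d : ℝ) - 1)) ≤ μH[(d : ℝ) - 1] (ball x r ∩ D) ∧
      μH[(d : ℝ) - 1] (ball x r ∩ D) ≤ ENNReal.ofReal (b * r ^ ((d : ℝ) - 1)))
    (L : NNReal)
    (hLip : ∀ x ∈ closure (frontier O \ D),
      ∃ U : Set (EuclideanSpace ℝ (Fin d)),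
      ∃ Φ : EuclideanSpace ℝ (Fin d) → EuclideanSpace ℝ (Fin d),
        IsOpen U ∧ x ∈ U ∧ Φ x = 0 ∧ Set.BijOn Φ U (unitCube d) ∧
        LipschitzOnWith L Φ U ∧
        (∀ y ∈ U, ∀ z ∈ U, dist y z ≤ (L : ℝ) * dist (Φ y) (Φ z)) ∧
        Φ '' (U ∩ O) = lowerHalfCube d ∧
        Φ '' (U ∩ frontier O) = cubeFace d) :
    ∃ a' b' : ℝ, 0 < a' ∧ a' ≤ b' ∧
      ∀ x ∈ frontier O, ∀ r : ℝ, 0 < r → r ≤ 1 →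
        ENNReal.ofReal (a' * r ^ ((d : ℝ) - 1)) ≤ μH[(d : ℝ) - 1] (ball x r ∩ frontier O) ∧
        μH[(d : ℝ) - 1] (ball x r ∩ frontier O) ≤ ENNReal.ofReal (b' * r ^ ((d : ℝ) - 1)) := by
  obtain ⟨n, rfl⟩ : ∃ n, d = n + 1 := ⟨d - 1, (Nat.sub_one_add_one (NeZero.ne d)).symm⟩
  have hdim : ((n + 1 : ℕ) : ℝ) - 1 = n := by push_cast; ring
  rw [hdim] at hDreg ⊢
  set L₁ := max L 1
  have hL₁ : (1 : ℝ) ≤ L₁ := by exact_mod_cast le_max_right L 1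
  have hδ1 : 1 / (2 * (L₁ : ℝ)) ≤ 1 := div_le_one_of_le₀ (by linarith) (by positivity)
  refine isAhlforsRegular_of_subset_union n.cast_nonneg hDO
    (closure_minimal sdiff_subset isClosed_frontier)
    (fun x hx => (em (x ∈ D)).imp_right fun hxD => subset_closure ⟨hx, hxD⟩)
    ⟨a, b, ha, hab, hDreg⟩ (c := (2 / (√(n + 1) * L₁ ^ 2)) ^ n)
    (C := (2 * √(n + 1) * L₁ ^ 2) ^ n) (by positivity) (by positivity) (by positivity) hδ1 ?_
  intro x hx t ht htδ
  obtain ⟨U, Φ, hU, hxU, hΦx, hbij, hΦ, hΦinv, -, hB⟩ := hLip x hx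
  have hchart : IsFlatChart (frontier O) U Φ x L₁ :=
    (IsFlatChart.mk hU hxU hΦx hbij hΦ hΦinv hB).mono (le_max_left L 1)
  simp only [Real.rpow_natCast]
  exact ⟨hchart.le_hausdorffMeasure_ball_inter ht (htδ.trans (hδ1.trans hL₁)),
    hchart.hausdorffMeasure_ball_inter_le (by positivity) ht htδ⟩

/-- If `D ⊆ ∂O` is `(d-1)`-regular and `O` satisfies a uniform Lipschitz condition
around `cl(∂O \ D)`, then the full boundary `∂O` is `(d-1)`-regular. -/
theorem full_boundary_regular (d : ℕ) [NeZero d] (hd : 2 ≤ d)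
    (O : Set (EuclideanSpace ℝ (Fin d))) (hO : IsOpen O)
    (D : Set (EuclideanSpace ℝ (Fin d))) (hDO : D ⊆ frontier O)
    (a b : ℝ) (ha : 0 < a) (hab : a ≤ b)
    (hDreg : ∀ x ∈ D, ∀ r : ℝ, 0 < r → r ≤ 1 →
      ENNReal.ofReal (a * r ^ ((d : ℝ) - 1)) ≤ μH[(d : ℝ) - 1] (ball x r ∩ D) ∧
      μH[(d : ℝ) - 1] (ball x r ∩ D) ≤ ENNReal.ofReal (b * r ^ ((d : ℝ) - 1)))
    (L : NNReal)
    (hLip : ∀ x ∈ closure (frontier O \ D),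
      ∃ U : Set (EuclideanSpace ℝ (Fin d)),
      ∃ Φ : EuclideanSpace ℝ (Fin d) → EuclideanSpace ℝ (Fin d),
        IsOpen U ∧ x ∈ U ∧ Φ x = 0 ∧ Set.BijOn Φ U (unitCube d) ∧
        LipschitzOnWith L Φ U ∧
        (∀ y ∈ U, ∀ z ∈ U, dist y z ≤ (L : ℝ) * dist (Φ y) (Φ z)) ∧
        Φ '' (U ∩ O) = lowerHalfCube d ∧
        Φ '' (U ∩ frontier O) = cubeFace d) :
    ∃ a' b' : ℝ, 0 < a' ∧ a' ≤ b' ∧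
      ∀ x ∈ frontier O, ∀ r : ℝ, 0 < r → r ≤ 1 →
        ENNReal.ofReal (a' * r ^ ((d : ℝ) - 1)) ≤ μH[(d : ℝ) - 1] (ball x r ∩ frontier O) ∧
        μH[(d : ℝ) - 1] (ball x r ∩ frontier O) ≤ ENNReal.ofReal (b' * r ^ ((d : ℝ) - 1)) :=
  full_boundary_regular_general d O D hDO a b ha hab hDreg L hLip
end
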